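/- arXiv:2506.02511 — 8 statements merged into one kernel-verified Lean document; each statement's English description precedes it below -/
import Mathlib

section
/- Let Δ be a root system of a finite-dimensional real inner product space 𝔞. Consider the group of invertible affine transformations of 𝔞, realized as pairs (s,v) with s an orthogonal transformation of 𝔞 and v ∈ 𝔞, acting by x ↦ s(x)+v and composed by (s,v)·(s',v') = (s∘s', s(v')+v). Let W̃(Δ) be the subgroup generated by the affine reflections {(w_α, (2nπ/‖α‖²)α) : α ∈ Δ, n ∈ ℤ}, and let L be the additive subgroup of 𝔞 generated by {(2π/‖α‖²)α : α ∈ Δ}. Then an affine transformation (s,v) belongs to W̃(Δ) if and only if s belongs to the Weyl group W(Δ) and v ∈ L; that is, W̃(Δ) = W(Δ) ⋉ L. -/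
open RealInnerProductSpace

/-- **The affine Weyl group is the semidirect product of the Weyl group and the
lattice of translations.**  Affine transformations of `𝔞` are realized as bijections
`x ↦ s x + v`; `W̃(Δ)` is the subgroup of bijections of `𝔞` generated by the affine
reflections `x ↦ w_α x + (2nπ/‖α‖²) α`, `W(Δ)` is the Weyl group (generated by the
reflections `w_α` inside the group of linear isometries), and `L` is the additive
subgroup generated by `(2π/‖α‖²) α` for `α ∈ Δ`.  Then `(s, v) ∈ W̃(Δ)` iff
`s ∈ W(Δ)` and `v ∈ L`. -/
theorem stmt_0 {𝔞 : Type*} [NormedAddCommGroup 𝔞] [InnerProductSpace ℝ 𝔞]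
    [FiniteDimensional ℝ 𝔞]
    (Δ : Set 𝔞) (hfin : Δ.Finite) (hzero : (0 : 𝔞) ∉ Δ)
    (hspan : Submodule.span ℝ Δ = ⊤)
    (hrefl : ∀ α ∈ Δ, ∀ β ∈ Δ, β - (2 * ⟪α, β⟫ / ‖α‖ ^ 2) • α ∈ Δ)
    (hint : ∀ α ∈ Δ, ∀ β ∈ Δ, ∃ k : ℤ, 2 * ⟪α, β⟫ / ‖α‖ ^ 2 = (k : ℝ))
    (Waff : Subgroup (Equiv.Perm 𝔞))
    (hWaff : Waff = Subgroup.closure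
      {g : Equiv.Perm 𝔞 | ∃ α ∈ Δ, ∃ n : ℤ, ∀ x : 𝔞,
        g x = (x - (2 * ⟪α, x⟫ / ‖α‖ ^ 2) • α) + (2 * (n : ℝ) * Real.pi / ‖α‖ ^ 2) • α})
    (W : Subgroup (𝔞 ≃ₗᵢ[ℝ] 𝔞))
    (hW : W = Subgroup.closure
      {s : 𝔞 ≃ₗᵢ[ℝ] 𝔞 | ∃ α ∈ Δ, ∀ x : 𝔞, s x = x - (2 * ⟪α, x⟫ / ‖α‖ ^ 2) • α})
    (L : AddSubgroup 𝔞)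
    (hL : L = AddSubgroup.closure {v : 𝔞 | ∃ α ∈ Δ, v = (2 * Real.pi / ‖α‖ ^ 2) • α})
    (g : Equiv.Perm 𝔞) :
    g ∈ Waff ↔ ∃ s ∈ W, ∃ v ∈ L, ∀ x : 𝔞, g x = s x + v := by
  -- norms of roots are nonzero
  have hnz : ∀ α ∈ Δ, (‖α‖ : ℝ) ^ 2 ≠ 0 := by
    intro α hα
    exact pow_ne_zero 2 (norm_ne_zero_iff.2 fun h => hzero (h ▸ hα))
  -- the reflections exist as linear isometry equivalences
  have hreflex : ∀ α ∈ Δ, ∃ s : 𝔞 ≃ₗᵢ[ℝ] 𝔞, ∀ x, s x = x - (2 * ⟪α, x⟫ / ‖α‖ ^ 2) • α := by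
    intro α _
    refine ⟨Submodule.reflection ((ℝ ∙ α)ᗮ), fun x => ?_⟩
    rw [Submodule.reflection_orthogonal_apply, Submodule.reflection_apply, Submodule.starProjection_singleton]
    simp only [RCLike.ofReal_real_eq_id, id]
    module
  -- any map satisfying the reflection formula is involutive
  have hinv : ∀ α ∈ Δ, ∀ f : 𝔞 → 𝔞,
      (∀ x, f x = x - (2 * ⟪α, x⟫ / ‖α‖ ^ 2) • α) → ∀ x, f (f x) = x := by
    intro α hα f hf x
    have hN := hnz α hα
    rw [hf, hf]
    have h1 : ⟪α, x - (2 * ⟪α, x⟫ / ‖α‖ ^ 2) • α⟫ = -⟪α, x⟫ := by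
      rw [inner_sub_right, real_inner_smul_right, real_inner_self_eq_norm_sq]
      rw [div_mul_cancel₀ _ hN]
      ring
    rw [h1]
    have h2 : (2 * -⟪α, x⟫ / ‖α‖ ^ 2) = -(2 * ⟪α, x⟫ / ‖α‖ ^ 2) := by ring
    rw [h2, neg_smul, sub_neg_eq_add, sub_add_cancel]
  subst hWaff hW hL
  set SW : Set (𝔞 ≃ₗᵢ[ℝ] 𝔞) :=
    {s : 𝔞 ≃ₗᵢ[ℝ] 𝔞 | ∃ α ∈ Δ, ∀ x : 𝔞, s x = x - (2 * ⟪α, x⟫ / ‖α‖ ^ 2) • α} with hSW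
  set SL : Set 𝔞 := {v : 𝔞 | ∃ α ∈ Δ, v = (2 * Real.pi / ‖α‖ ^ 2) • α} with hSL
  -- the Weyl group preserves the lattice
  have hWL : ∀ s ∈ Subgroup.closure SW, ∀ v, v ∈ AddSubgroup.closure SL ↔
      s v ∈ AddSubgroup.closure SL := by
    intro s hs
    induction hs using Subgroup.closure_induction with
    | mem s hsmem =>
      obtain ⟨α, hα, hsf⟩ := hsmem
      have fwd : ∀ v ∈ AddSubgroup.closure SL, s v ∈ AddSubgroup.closure SL := by
        intro v hv
        induction hv using AddSubgroup.closure_induction with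
        | mem v hvmem =>
          obtain ⟨β, hβ, rfl⟩ := hvmem
          have hmap : s ((2 * Real.pi / ‖β‖ ^ 2) • β) = (2 * Real.pi / ‖s β‖ ^ 2) • (s β) := by
            rw [map_smul, s.norm_map]
          rw [hmap]
          exact AddSubgroup.subset_closure ⟨s β, by rw [hsf β]; exact hrefl α hα β hβ, rfl⟩
        | zero => rw [map_zero]; exact zero_mem _
        | add v w _ _ hv hw => rw [map_add]; exact add_mem hv hw
        | neg v _ hv => rw [map_neg]; exact neg_mem hv
      intro v
      constructor
      · exact fwd v
      · intro hsv
        have := fwd (s v) hsv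
        rwa [hinv α hα s hsf v] at this
    | one => intro v; simp
    | mul s t _ _ hs ht =>
      intro v
      rw [ht v, hs (t v)]
      exact Iff.rfl
    | inv s _ hs =>
      intro v
      have h2 : s ((s⁻¹ : 𝔞 ≃ₗᵢ[ℝ] 𝔞) v) = v := s.apply_symm_apply v
      conv_lhs => rw [← h2]
      exact (hs ((s⁻¹ : 𝔞 ≃ₗᵢ[ℝ] 𝔞) v)).symm
  constructor
  · -- forward direction
    intro hg
    induction hg using Subgroup.closure_induction with
    | mem g hgmem =>
      obtain ⟨α, hα, n, hgf⟩ := hgmem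
      obtain ⟨s, hsf⟩ := hreflex α hα
      refine ⟨s, Subgroup.subset_closure ⟨α, hα, hsf⟩,
        (2 * (n : ℝ) * Real.pi / ‖α‖ ^ 2) • α, ?_, ?_⟩
      · have : (2 * (n : ℝ) * Real.pi / ‖α‖ ^ 2) • α
            = n • ((2 * Real.pi / ‖α‖ ^ 2) • α) := by
          rw [← Int.cast_smul_eq_zsmul ℝ, smul_smul]
          congr 1
          ring
        rw [this]
        exact zsmul_mem (AddSubgroup.subset_closure
          (show (2 * Real.pi / ‖α‖ ^ 2) • α ∈ SL from ⟨α, hα, rfl⟩)) n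
      · intro x
        rw [hgf x, hsf x]
    | one =>
      exact ⟨1, one_mem _, 0, zero_mem _, fun x => by simp⟩
    | mul a b _ _ ha hb =>
      obtain ⟨s, hs, v, hv, haf⟩ := ha
      obtain ⟨t, ht, w, hw, hbf⟩ := hb
      refine ⟨s * t, mul_mem hs ht, s w + v, add_mem ((hWL s hs w).1 hw) hv, fun x => ?_⟩
      have : (a * b) x = a (b x) := rfl
      rw [this, hbf x, haf (t x + w), map_add]
      show s (t x) + s w + v = s (t x) + (s w + v)
      rw [add_assoc]
    | inv a _ ha =>
      obtain ⟨s, hs, v, hv, haf⟩ := ha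
      refine ⟨s⁻¹, inv_mem hs, -((s⁻¹ : 𝔞 ≃ₗᵢ[ℝ] 𝔞) v),
        neg_mem ((hWL s⁻¹ (inv_mem hs) v).1 hv), fun x => ?_⟩
      apply a.injective
      have h1 : a (a⁻¹ x) = x := a.apply_symm_apply x
      rw [h1, haf]
      have h2 : ∀ y : 𝔞, s ((s⁻¹ : 𝔞 ≃ₗᵢ[ℝ] 𝔞) y) = y := fun y => s.apply_symm_apply y
      rw [map_add, map_neg, h2, h2]
      abel
  · -- backward direction
    rintro ⟨s, hs, v, hv, hg⟩
    -- linear isometries in W, viewed as permutations, lie in Waff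
    have hWperm : ∀ t ∈ Subgroup.closure SW, (t.toEquiv : Equiv.Perm 𝔞) ∈
        Subgroup.closure {g : Equiv.Perm 𝔞 | ∃ α ∈ Δ, ∃ n : ℤ, ∀ x : 𝔞,
          g x = (x - (2 * ⟪α, x⟫ / ‖α‖ ^ 2) • α) + (2 * (n : ℝ) * Real.pi / ‖α‖ ^ 2) • α} := by
      intro t ht
      induction ht using Subgroup.closure_induction with
      | mem t htmem =>
        obtain ⟨α, hα, htf⟩ := htmem
        refine Subgroup.subset_closure ⟨α, hα, 0, fun x => ?_⟩
        rw [show (t.toEquiv : Equiv.Perm 𝔞) x = t x from rfl, htf x]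
        norm_num
      | one => exact one_mem _
      | mul a b _ _ ha hb =>
        have : ((a * b).toEquiv : Equiv.Perm 𝔞) = a.toEquiv * b.toEquiv := rfl
        rw [this]; exact mul_mem ha hb
      | inv a _ ha =>
        have : ((a⁻¹ : 𝔞 ≃ₗᵢ[ℝ] 𝔞).toEquiv : Equiv.Perm 𝔞) = (a.toEquiv : Equiv.Perm 𝔞)⁻¹ := rfl
        rw [this]; exact inv_mem ha
    -- translations by lattice vectors lie in Waff
    have htrans : ∀ w ∈ AddSubgroup.closure SL, (Equiv.addRight w : Equiv.Perm 𝔞) ∈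
        Subgroup.closure {g : Equiv.Perm 𝔞 | ∃ α ∈ Δ, ∃ n : ℤ, ∀ x : 𝔞,
          g x = (x - (2 * ⟪α, x⟫ / ‖α‖ ^ 2) • α) + (2 * (n : ℝ) * Real.pi / ‖α‖ ^ 2) • α} := by
      intro w hw
      induction hw using AddSubgroup.closure_induction with
      | mem w hwmem =>
        obtain ⟨α, hα, rfl⟩ := hwmem
        obtain ⟨t, htf⟩ := hreflex α hα
        have hg0 : (t.toEquiv : Equiv.Perm 𝔞) ∈
            {g : Equiv.Perm 𝔞 | ∃ α ∈ Δ, ∃ n : ℤ, ∀ x : 𝔞,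
              g x = (x - (2 * ⟪α, x⟫ / ‖α‖ ^ 2) • α) + (2 * (n : ℝ) * Real.pi / ‖α‖ ^ 2) • α} :=
          ⟨α, hα, 0, fun x => by
            rw [show (t.toEquiv : Equiv.Perm 𝔞) x = t x from rfl, htf x]; norm_num⟩
        have hg1 : (t.toEquiv.trans (Equiv.addRight ((2 * Real.pi / ‖α‖ ^ 2) • α)) :
            Equiv.Perm 𝔞) ∈
            {g : Equiv.Perm 𝔞 | ∃ α ∈ Δ, ∃ n : ℤ, ∀ x : 𝔞,
              g x = (x - (2 * ⟪α, x⟫ / ‖α‖ ^ 2) • α) + (2 * (n : ℝ) * Real.pi / ‖α‖ ^ 2) • α} :=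
          ⟨α, hα, 1, fun x => by
            show t x + (2 * Real.pi / ‖α‖ ^ 2) • α = _
            rw [htf x]
            norm_num⟩
        have key : (Equiv.addRight ((2 * Real.pi / ‖α‖ ^ 2) • α) : Equiv.Perm 𝔞)
            = (t.toEquiv.trans (Equiv.addRight ((2 * Real.pi / ‖α‖ ^ 2) • α)) : Equiv.Perm 𝔞)
              * (t.toEquiv : Equiv.Perm 𝔞) := by
          ext x
          show x + (2 * Real.pi / ‖α‖ ^ 2) • α = t (t x) + (2 * Real.pi / ‖α‖ ^ 2) • α
          rw [hinv α hα t htf x]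
        rw [key]
        exact mul_mem (Subgroup.subset_closure hg1) (Subgroup.subset_closure hg0)
      | zero =>
        have : (Equiv.addRight (0 : 𝔞) : Equiv.Perm 𝔞) = 1 := by ext x; simp
        rw [this]; exact one_mem _
      | add a b _ _ ha hb =>
        have : (Equiv.addRight (a + b) : Equiv.Perm 𝔞)
            = (Equiv.addRight a : Equiv.Perm 𝔞) * (Equiv.addRight b : Equiv.Perm 𝔞) := by
          ext x
          show x + (a + b) = x + b + a
          rw [add_assoc, add_comm b a]
        rw [this]; exact mul_mem ha hb
      | neg a _ ha =>
        have : (Equiv.addRight (-a) : Equiv.Perm 𝔞) = (Equiv.addRight a : Equiv.Perm 𝔞)⁻¹ := by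
          ext x
          simp [Equiv.Perm.inv_def]
        rw [this]; exact inv_mem ha
    have key : g = (Equiv.addRight v : Equiv.Perm 𝔞) * (s.toEquiv : Equiv.Perm 𝔞) := by
      ext x
      exact hg x
    rw [key]
    exact mul_mem (htrans v hv) (hWperm s hs)
end

section
/- Let Δ be a root system of 𝔞 with fundamental system Π = {α₁,…,α_r}, highest root δ̃ = Σᵢ mᵢαᵢ, and dual basis α¹,…,αʳ (⟨αⁱ,α_j⟩ = δ_{ij}). Suppose m_{i₀} = 1 and set Y = (π/2)α^{i₀} and Σ_Y = {λ ∈ Δ : ⟨λ,Y⟩ ∈ πℤ}. Then Π ∖ {α_{i₀}} is a fundamental system of Σ_Y; in particular, the dimension of the linear span of Σ_Y equals r − 1. -/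
open RealInnerProductSpace

/-- `B` is a fundamental system of the finite set `Φ`: `B ⊆ Φ`, `B` is linearly
independent, and every element of `Φ` is an integral linear combination of elements
of `B` with coefficients all nonnegative or all nonpositive. -/
def IsFundamentalSystem {𝔞 : Type*} [AddCommGroup 𝔞] [Module ℝ 𝔞]
    (Φ B : Set 𝔞) : Prop :=
  B ⊆ Φ ∧ LinearIndependent ℝ ((↑) : B → 𝔞) ∧
    ∀ β ∈ Φ, ∃ (s : Finset 𝔞) (c : 𝔞 → ℤ), (s : Set 𝔞) ⊆ B ∧
      β = ∑ x ∈ s, (c x : ℝ) • x ∧ ((∀ x ∈ s, 0 ≤ c x) ∨ (∀ x ∈ s, c x ≤ 0))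

/-- **Theorem (case `m_{i₀} = 1`).**  Let `Δ` be a root system of `𝔞` with fundamental
system `Π = {α₁,…,α_r}`, highest root `δ̃ = Σ mᵢ αᵢ` and dual basis `⟨αⁱ, α_j⟩ = δ_{ij}`.
If `m_{i₀} = 1` and `Y = (π/2) α^{i₀}`, then `Π ∖ {α_{i₀}}` is a fundamental system of
`Σ_Y = {λ ∈ Δ : ⟨λ, Y⟩ ∈ πℤ}`; in particular the span of `Σ_Y` has dimension `r - 1`. -/
theorem stmt_3 {𝔞 : Type*} [NormedAddCommGroup 𝔞] [InnerProductSpace ℝ 𝔞]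
    [FiniteDimensional ℝ 𝔞]
    (Δ : Set 𝔞) (hfin : Δ.Finite) (hzero : (0 : 𝔞) ∉ Δ)
    (hspan : Submodule.span ℝ Δ = ⊤)
    (hrefl : ∀ α ∈ Δ, ∀ β ∈ Δ, β - (2 * ⟪α, β⟫ / ‖α‖ ^ 2) • α ∈ Δ)
    (hint : ∀ α ∈ Δ, ∀ β ∈ Δ, ∃ k : ℤ, 2 * ⟪α, β⟫ / ‖α‖ ^ 2 = (k : ℝ))
    (r : ℕ) (α : Fin r → 𝔞)
    (hαΔ : ∀ i, α i ∈ Δ)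
    (hindep : LinearIndependent ℝ α)
    (hfund : ∀ β ∈ Δ, ∃ c : Fin r → ℤ, β = ∑ i, (c i : ℝ) • α i ∧
      ((∀ i, 0 ≤ c i) ∨ (∀ i, c i ≤ 0)))
    (m : Fin r → ℕ) (hmpos : ∀ i, 0 < m i)
    (hδ : ∑ i, (m i : ℝ) • α i ∈ Δ)
    (hhigh : ∀ β ∈ Δ, ∀ c : Fin r → ℤ, β = ∑ i, (c i : ℝ) • α i → ∀ i, c i ≤ (m i : ℤ))
    (d : Fin r → 𝔞) (hd : ∀ i j, ⟪d i, α j⟫ = if i = j then 1 else 0)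
    (i₀ : Fin r) (hm1 : m i₀ = 1)
    (Y : 𝔞) (hY : Y = (Real.pi / 2) • d i₀)
    (SY : Set 𝔞) (hSY : SY = {lam | lam ∈ Δ ∧ ∃ k : ℤ, ⟪lam, Y⟫ = (k : ℝ) * Real.pi}) :
    IsFundamentalSystem SY (α '' {i | i ≠ i₀}) ∧
      Module.finrank ℝ ↥(Submodule.span ℝ SY) = r - 1 := by
  subst hY hSY
  have hinj : Function.Injective α := hindep.injective
  -- Δ is closed under negation
  have hneg : ∀ β ∈ Δ, -β ∈ Δ := by
    intro β hβ
    have hβ0 : β ≠ 0 := fun h' => hzero (h' ▸ hβ)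
    have hn : ‖β‖ ^ 2 ≠ 0 := pow_ne_zero 2 (norm_ne_zero_iff.mpr hβ0)
    have h := hrefl β hβ β hβ
    rw [real_inner_self_eq_norm_sq, mul_div_assoc, div_self hn, mul_one] at h
    have : β - (2 : ℝ) • β = -β := by
      rw [two_smul]; abel
    rwa [this] at h
  -- inner product with dual basis extracts coefficients
  have hcoef : ∀ (c : Fin r → ℝ) (j : Fin r), ⟪d j, ∑ i, c i • α i⟫ = c j := by
    intro c j
    rw [inner_sum]
    simp_rw [real_inner_smul_right, hd]
    simp
  -- inner product of a decomposed root with Y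
  have hinnerY : ∀ (c : Fin r → ℝ),
      ⟪∑ i, c i • α i, (Real.pi / 2) • d i₀⟫ = (Real.pi / 2) * c i₀ := by
    intro c
    rw [real_inner_smul_right, real_inner_comm, hcoef]
  -- for β ∈ SY with decomposition c, c i₀ = 0
  have hc0 : ∀ β ∈ Δ, ∀ c : Fin r → ℤ, β = ∑ i, (c i : ℝ) • α i →
      (∃ k : ℤ, ⟪β, (Real.pi / 2) • d i₀⟫ = (k : ℝ) * Real.pi) → c i₀ = 0 := by
    intro β hβ c hc ⟨k, hk⟩
    have h1 : c i₀ ≤ 1 := by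
      have := hhigh β hβ c hc i₀; omega
    have h2 : -c i₀ ≤ 1 := by
      have hd2 : -β = ∑ i, ((-c i : ℤ) : ℝ) • α i := by
        rw [hc]; simp [Finset.sum_neg_distrib]
      have := hhigh (-β) (hneg β hβ) (fun i => -c i) hd2 i₀; omega
    have hkc : (Real.pi / 2) * (c i₀ : ℝ) = (k : ℝ) * Real.pi := by
      rw [hc, hinnerY] at hk; exact_mod_cast hk
    have hc2k : (c i₀ : ℝ) = ((2 * k : ℤ) : ℝ) := by
      have hπ : Real.pi ≠ 0 := Real.pi_ne_zero
      push_cast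
      have h2 : Real.pi / 2 * (c i₀ : ℝ) = Real.pi / 2 * (2 * k) := by
        rw [hkc]; ring
      exact mul_left_cancel₀ (by positivity) h2
    have : c i₀ = 2 * k := by exact_mod_cast hc2k
    omega
  -- the simple roots other than α i₀ lie in SY
  have hsub : α '' {i | i ≠ i₀} ⊆
      {lam | lam ∈ Δ ∧ ∃ k : ℤ, ⟪lam, (Real.pi / 2) • d i₀⟫ = (k : ℝ) * Real.pi} := by
    rintro x ⟨i, hi, rfl⟩
    refine ⟨hαΔ i, 0, ?_⟩
    rw [real_inner_smul_right, real_inner_comm, hd, if_neg (fun h => hi h.symm)]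
    simp
  -- every β ∈ SY decomposes with c i₀ = 0
  have hdecomp : ∀ β ∈ Δ, (∃ k : ℤ, ⟪β, (Real.pi / 2) • d i₀⟫ = (k : ℝ) * Real.pi) →
      ∃ c : Fin r → ℤ, c i₀ = 0 ∧ β = ∑ i ∈ Finset.univ.filter (· ≠ i₀), (c i : ℝ) • α i ∧
        ((∀ i, 0 ≤ c i) ∨ (∀ i, c i ≤ 0)) := by
    intro β hβ hk
    obtain ⟨c, hc, hsign⟩ := hfund β hβ
    have h0 : c i₀ = 0 := hc0 β hβ c hc hk
    refine ⟨c, h0, ?_, hsign⟩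
    rw [hc, eq_comm]
    apply Finset.sum_filter_of_ne
    intro i _ hne
    intro hii₀
    subst hii₀
    simp [h0] at hne
  constructor
  · refine ⟨hsub, ?_, ?_⟩
    · -- linear independence
      have h1 : LinearIndependent ℝ (fun x : {i | i ≠ i₀} => α x) :=
        hindep.comp _ Subtype.val_injective
      have h2 := h1.linearIndepOn_id
      rwa [← Set.image_eq_range] at h2
    · intro β hβ
      obtain ⟨c, h0, hc, hsign⟩ := hdecomp β hβ.1 hβ.2
      classical
      set s : Finset 𝔞 := (Finset.univ.filter (· ≠ i₀)).image α with hs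
      set cf : 𝔞 → ℤ := fun x => if h : ∃ i, α i = x then c h.choose else 0 with hcf
      have hcfα : ∀ i, cf (α i) = c i := by
        intro i
        have hex : ∃ j, α j = α i := ⟨i, rfl⟩
        simp only [hcf, dif_pos hex]
        congr 1
        exact hinj hex.choose_spec
      refine ⟨s, cf, ?_, ?_, ?_⟩
      · intro x hx
        simp only [hs, Finset.coe_image, Finset.coe_filter] at hx
        obtain ⟨i, hi, rfl⟩ := hx
        exact ⟨i, hi.2, rfl⟩
      · rw [hc, hs, Finset.sum_image (fun a _ b _ h => hinj h)]
        exact Finset.sum_congr rfl fun i _ => by rw [hcfα]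
      · rcases hsign with h | h
        · left; intro x hx
          simp only [hs, Finset.mem_image] at hx
          obtain ⟨i, _, rfl⟩ := hx
          rw [hcfα]; exact h i
        · right; intro x hx
          simp only [hs, Finset.mem_image] at hx
          obtain ⟨i, _, rfl⟩ := hx
          rw [hcfα]; exact h i
  · -- dimension
    have hspanEq : Submodule.span ℝ
        {lam | lam ∈ Δ ∧ ∃ k : ℤ, ⟪lam, (Real.pi / 2) • d i₀⟫ = (k : ℝ) * Real.pi} =
        Submodule.span ℝ (α '' {i | i ≠ i₀}) := by
      apply le_antisymm
      · rw [Submodule.span_le]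
        intro β hβ
        obtain ⟨c, h0, hc, _⟩ := hdecomp β hβ.1 hβ.2
        rw [hc]
        apply Submodule.sum_mem
        intro i hi
        simp only [Finset.mem_filter] at hi
        exact Submodule.smul_mem _ _ (Submodule.subset_span ⟨i, hi.2, rfl⟩)
      · exact Submodule.span_mono hsub
    rw [hspanEq, Set.image_eq_range]
    have h1 : LinearIndependent ℝ (fun x : {i | i ≠ i₀} => α x) :=
      hindep.comp _ Subtype.val_injective
    rw [finrank_span_eq_card h1]
    simp [Fintype.card_subtype_compl, Finset.filter_ne']
end

section
/- Let Δ be a root system of 𝔞 with fundamental system Π = {α₁,…,α_r}, highest root δ̃ = Σᵢ mᵢαᵢ, and dual basis α¹,…,αʳ (⟨αⁱ,α_j⟩ = δ_{ij}). Suppose m_{i₀} = 2 and set Y = (π/2)α^{i₀} and Σ_Y = {λ ∈ Δ : ⟨λ,Y⟩ ∈ πℤ}. Then (Π ∖ {α_{i₀}}) ∪ {−δ̃} is a fundamental system of Σ_Y; in particular, the dimension of the linear span of Σ_Y equals r. -/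
open RealInnerProductSpace

/-- **Theorem (case `m_{i₀} = 2`).**  Let `Δ` be a root system of `𝔞` with fundamental
system `Π = {α₁,…,α_r}`, highest root `δ̃ = Σ mᵢ αᵢ` and dual basis `⟨αⁱ, α_j⟩ = δ_{ij}`.
If `m_{i₀} = 2` and `Y = (π/2) α^{i₀}`, then `(Π ∖ {α_{i₀}}) ∪ {-δ̃}` is a fundamental
system of `Σ_Y = {λ ∈ Δ : ⟨λ, Y⟩ ∈ πℤ}`; in particular the span of `Σ_Y` has
dimension `r`. -/
theorem stmt_4 {𝔞 : Type*} [NormedAddCommGroup 𝔞] [InnerProductSpace ℝ 𝔞]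
    [FiniteDimensional ℝ 𝔞]
    (Δ : Set 𝔞) (hfin : Δ.Finite) (hzero : (0 : 𝔞) ∉ Δ)
    (hspan : Submodule.span ℝ Δ = ⊤)
    (hrefl : ∀ α ∈ Δ, ∀ β ∈ Δ, β - (2 * ⟪α, β⟫ / ‖α‖ ^ 2) • α ∈ Δ)
    (hint : ∀ α ∈ Δ, ∀ β ∈ Δ, ∃ k : ℤ, 2 * ⟪α, β⟫ / ‖α‖ ^ 2 = (k : ℝ))
    (r : ℕ) (α : Fin r → 𝔞)
    (hαΔ : ∀ i, α i ∈ Δ)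
    (hindep : LinearIndependent ℝ α)
    (hfund : ∀ β ∈ Δ, ∃ c : Fin r → ℤ, β = ∑ i, (c i : ℝ) • α i ∧
      ((∀ i, 0 ≤ c i) ∨ (∀ i, c i ≤ 0)))
    (m : Fin r → ℕ) (hmpos : ∀ i, 0 < m i)
    (hδ : ∑ i, (m i : ℝ) • α i ∈ Δ)
    (hhigh : ∀ β ∈ Δ, ∀ c : Fin r → ℤ, β = ∑ i, (c i : ℝ) • α i → ∀ i, c i ≤ (m i : ℤ))
    (d : Fin r → 𝔞) (hd : ∀ i j, ⟪d i, α j⟫ = if i = j then 1 else 0)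
    (i₀ : Fin r) (hm2 : m i₀ = 2)
    (Y : 𝔞) (hY : Y = (Real.pi / 2) • d i₀)
    (SY : Set 𝔞) (hSY : SY = {lam | lam ∈ Δ ∧ ∃ k : ℤ, ⟪lam, Y⟫ = (k : ℝ) * Real.pi}) :
    IsFundamentalSystem SY (α '' {i | i ≠ i₀} ∪ {-(∑ i, (m i : ℝ) • α i)}) ∧
      Module.finrank ℝ ↥(Submodule.span ℝ SY) = r := by
  classical
  set δ : 𝔞 := ∑ i, (m i : ℝ) • α i with hδdef
  have hne : ∀ β ∈ Δ, β ≠ 0 := fun β hβ h => hzero (h ▸ hβ)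
  have hneg : ∀ β ∈ Δ, -β ∈ Δ := by
    intro β hβ
    have h2 : 2 * ⟪β, β⟫ / ‖β‖ ^ 2 = 2 := by
      rw [real_inner_self_eq_norm_sq]
      have : ‖β‖ ≠ 0 := norm_ne_zero_iff.mpr (hne β hβ)
      field_simp
    have h := hrefl β hβ β hβ
    rw [h2] at h
    have he : β - (2:ℝ) • β = -β := by module
    rwa [he] at h
  have hnegδΔ : -δ ∈ Δ := hneg δ hδ
  have hcoef : ∀ t : Fin r → ℝ, ⟪d i₀, ∑ i, t i • α i⟫ = t i₀ := by
    intro t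
    rw [inner_sum]
    simp only [real_inner_smul_right, hd]
    simp
  have hπ : Real.pi ≠ 0 := Real.pi_ne_zero
  have hinY : ∀ t : Fin r → ℝ, ⟪∑ i, t i • α i, Y⟫ = (Real.pi / 2) * t i₀ := by
    intro t
    rw [hY, real_inner_smul_right, real_inner_comm, hcoef]
  have hmemSY : ∀ c : Fin r → ℤ, (∑ i, ((c i : ℤ) : ℝ) • α i) ∈ Δ →
      ((∑ i, ((c i : ℤ) : ℝ) • α i) ∈ SY ↔ ∃ k : ℤ, c i₀ = 2 * k) := by
    intro c hβ
    rw [hSY]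
    simp only [Set.mem_setOf_eq]
    constructor
    · rintro ⟨-, k, hk⟩
      rw [hinY] at hk
      refine ⟨k, ?_⟩
      have h2 : Real.pi * ((c i₀ : ℤ) : ℝ) = Real.pi * ((2 * k : ℤ) : ℝ) := by
        push_cast
        push_cast at hk
        linarith
      exact_mod_cast mul_left_cancel₀ hπ h2
    · rintro ⟨k, hk⟩
      refine ⟨hβ, k, ?_⟩
      rw [hinY, hk]
      push_cast
      ring
  set f : Fin r → 𝔞 := fun i => if i = i₀ then -δ else α i with hfdef
  have hexp : ∀ t : Fin r → ℝ, ∑ i, t i • f i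
      = ∑ j, ((if j = i₀ then 0 else t j) - t i₀ * (m j : ℝ)) • α j := by
    intro t
    have h1 : ∀ i, t i • f i
        = (if i = i₀ then 0 else t i) • α i + (if i = i₀ then t i₀ • (-δ) else 0) := by
      intro i
      by_cases h : i = i₀ <;> simp [hfdef, h]
    rw [Finset.sum_congr rfl fun i _ => h1 i, Finset.sum_add_distrib,
      Finset.sum_ite_eq' Finset.univ i₀ fun _ => t i₀ • (-δ)]
    simp only [Finset.mem_univ, if_true]
    rw [hδdef, smul_neg, Finset.smul_sum, ← sub_eq_add_neg, ← Finset.sum_sub_distrib]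
    refine Finset.sum_congr rfl fun j _ => ?_
    rw [smul_smul, ← sub_smul]
  have hfi : LinearIndependent ℝ f := by
    rw [Fintype.linearIndependent_iff]
    intro t ht
    rw [hexp] at ht
    have hz := Fintype.linearIndependent_iff.mp hindep _ ht
    have h0 : t i₀ = 0 := by
      have h := hz i₀
      rw [hm2] at h
      simp at h
      linarith
    intro i
    by_cases h : i = i₀
    · rw [h]; exact h0
    · have hh := hz i
      simp [h, h0] at hh
      exact hh
  have hf_inj : Function.Injective f := hfi.injective
  have hBrange : α '' {i | i ≠ i₀} ∪ {-δ} = Set.range f := by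
    ext x
    simp only [Set.mem_union, Set.mem_image, Set.mem_setOf_eq, Set.mem_singleton_iff,
      Set.mem_range]
    constructor
    · rintro (⟨i, hi, rfl⟩ | rfl)
      · exact ⟨i, by simp [hfdef, hi]⟩
      · exact ⟨i₀, by simp [hfdef]⟩
    · rintro ⟨i, rfl⟩
      by_cases hi : i = i₀
      · right; simp [hfdef, hi]
      · left; exact ⟨i, hi, by simp [hfdef, hi]⟩
  have hBsub : α '' {i | i ≠ i₀} ∪ {-δ} ⊆ SY := by
    rintro x (⟨i, hi, rfl⟩ | rfl)
    · rw [hSY]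
      refine ⟨hαΔ i, 0, ?_⟩
      rw [hY, real_inner_smul_right, real_inner_comm, hd]
      simp [Ne.symm hi]
    · rw [hSY]
      refine ⟨hnegδΔ, -1, ?_⟩
      rw [hY, real_inner_smul_right, real_inner_comm, inner_neg_right, hδdef, hcoef, hm2]
      push_cast
      ring
  have hcomb : ∀ β ∈ SY, ∃ g : Fin r → ℤ,
      β = ∑ i, ((g i : ℤ) : ℝ) • f i ∧ ((∀ i, 0 ≤ g i) ∨ (∀ i, g i ≤ 0)) := by
    intro β hβSY
    have hβΔ : β ∈ Δ := by rw [hSY] at hβSY; exact hβSY.1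
    obtain ⟨c, hc, hsign⟩ := hfund β hβΔ
    have hcneg : -β = ∑ i, ((-c i : ℤ) : ℝ) • α i := by
      rw [hc, ← Finset.sum_neg_distrib]
      push_cast
      simp [neg_smul]
    have huball : ∀ i, c i ≤ (m i : ℤ) := hhigh β hβΔ c hc
    have hlball : ∀ i, -(m i : ℤ) ≤ c i := by
      intro i
      have := hhigh (-β) (hneg β hβΔ) (fun i => -c i) hcneg i
      omega
    have heven : ∃ k : ℤ, c i₀ = 2 * k := (hmemSY c (hc ▸ hβΔ)).mp (hc ▸ hβSY)
    obtain ⟨k, hk⟩ := heven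
    have hub : c i₀ ≤ 2 := by have := huball i₀; rw [hm2] at this; exact_mod_cast this
    have hlb : -2 ≤ c i₀ := by have := hlball i₀; rw [hm2] at this; exact_mod_cast this
    have htri : c i₀ = -2 ∨ c i₀ = 0 ∨ c i₀ = 2 := by omega
    rcases htri with h | h | h
    · refine ⟨fun i => if i = i₀ then 1 else c i + m i, ?_, Or.inl ?_⟩
      · rw [hexp, hc]
        refine Finset.sum_congr rfl fun j _ => ?_
        by_cases hj : j = i₀
        · subst hj
          rw [h]
          simp [hm2]
        · simp only [hj, if_false, if_neg hj]
          push_cast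
          ring_nf
      · intro i
        by_cases hi : i = i₀
        · simp [hi]
        · simp only [hi, if_false]
          have := hlball i
          omega
    · refine ⟨fun i => if i = i₀ then 0 else c i, ?_, ?_⟩
      · rw [hexp, hc]
        refine Finset.sum_congr rfl fun j _ => ?_
        by_cases hj : j = i₀
        · subst hj
          rw [h]
          simp
        · simp [hj]
      · rcases hsign with hs | hs
        · left; intro i; by_cases hi : i = i₀ <;> simp [hi] <;> exact hs i
        · right; intro i; by_cases hi : i = i₀ <;> simp [hi] <;> exact hs i
    · refine ⟨fun i => if i = i₀ then -1 else c i - m i, ?_, Or.inr ?_⟩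
      · rw [hexp, hc]
        refine Finset.sum_congr rfl fun j _ => ?_
        by_cases hj : j = i₀
        · subst hj
          rw [h]
          simp [hm2]
        · simp only [hj, if_false, if_neg hj]
          push_cast
          ring_nf
      · intro i
        by_cases hi : i = i₀
        · simp [hi]
        · simp only [hi, if_false]
          have := huball i
          omega
  refine ⟨⟨hBsub, ?_, ?_⟩, ?_⟩
  · rw [hBrange]
    exact hfi.linearIndepOn_id
  · intro β hβ
    obtain ⟨g, hg, hsg⟩ := hcomb β hβ
    have hcg : ∀ i, (if h : ∃ j, f j = f i then g h.choose else 0) = g i := by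
      intro i
      have hex : ∃ j, f j = f i := ⟨i, rfl⟩
      rw [dif_pos hex, hf_inj hex.choose_spec]
    refine ⟨Finset.univ.image f, fun x => if h : ∃ i, f i = x then g h.choose else 0,
      ?_, ?_, ?_⟩
    · intro x hx
      simp only [Finset.coe_image, Finset.coe_univ, Set.image_univ] at hx
      rw [hBrange]
      exact hx
    · rw [Finset.sum_image (fun i _ j _ h => hf_inj h), hg]
      exact Finset.sum_congr rfl fun i _ => by simp only [hcg i]
    · rcases hsg with h | h
      · left
        intro x hx
        simp only [Finset.mem_image, Finset.mem_univ, true_and] at hx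
        obtain ⟨i, rfl⟩ := hx
        simp only [hcg i]
        exact h i
      · right
        intro x hx
        simp only [Finset.mem_image, Finset.mem_univ, true_and] at hx
        obtain ⟨i, rfl⟩ := hx
        simp only [hcg i]
        exact h i
  · have hspanEq : Submodule.span ℝ SY = Submodule.span ℝ (Set.range f) := by
      apply le_antisymm
      · rw [Submodule.span_le]
        intro β hβ
        obtain ⟨g, hg, -⟩ := hcomb β hβ
        rw [hg]
        exact Submodule.sum_mem _ fun i _ =>
          Submodule.smul_mem _ _ (Submodule.subset_span ⟨i, rfl⟩)
      · rw [Submodule.span_le]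
        rintro x ⟨i, rfl⟩
        exact Submodule.subset_span (hBsub (hBrange ▸ Set.mem_range_self i))
    rw [hspanEq, finrank_span_eq_card hfi, Fintype.card_fin]
end

section
/- Let Δ be a root system of 𝔞 with fundamental system Π = {α₁,…,α_r}, highest root δ̃ = Σᵢ mᵢαᵢ, and dual basis α¹,…,αʳ (⟨αⁱ,α_j⟩ = δ_{ij}). Suppose i₁ ≠ i₂ with m_{i₁} = m_{i₂} = 1 and set Y = (π/2)(α^{i₁} + α^{i₂}) and Σ_Y = {λ ∈ Δ : ⟨λ,Y⟩ ∈ πℤ}. Then (Π ∖ {α_{i₁}, α_{i₂}}) ∪ {−δ̃} is a fundamental system of Σ_Y; in particular, the dimension of the linear span of Σ_Y equals r − 1. -/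
open RealInnerProductSpace

/-- **Theorem (case `Y = (π/2)(α^{i₁} + α^{i₂})`, `m_{i₁} = m_{i₂} = 1`, `i₁ ≠ i₂`).**
Let `Δ` be a root system of `𝔞` with fundamental system `Π = {α₁,…,α_r}`, highest root
`δ̃ = Σ mᵢ αᵢ` and dual basis `⟨αⁱ, α_j⟩ = δ_{ij}`.  Then `(Π ∖ {α_{i₁}, α_{i₂}}) ∪ {-δ̃}`
is a fundamental system of `Σ_Y = {λ ∈ Δ : ⟨λ, Y⟩ ∈ πℤ}`; in particular the span of
`Σ_Y` has dimension `r - 1`. -/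
theorem stmt_5 {𝔞 : Type*} [NormedAddCommGroup 𝔞] [InnerProductSpace ℝ 𝔞]
    [FiniteDimensional ℝ 𝔞]
    (Δ : Set 𝔞) (hfin : Δ.Finite) (hzero : (0 : 𝔞) ∉ Δ)
    (hspan : Submodule.span ℝ Δ = ⊤)
    (hrefl : ∀ α ∈ Δ, ∀ β ∈ Δ, β - (2 * ⟪α, β⟫ / ‖α‖ ^ 2) • α ∈ Δ)
    (hint : ∀ α ∈ Δ, ∀ β ∈ Δ, ∃ k : ℤ, 2 * ⟪α, β⟫ / ‖α‖ ^ 2 = (k : ℝ))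
    (r : ℕ) (α : Fin r → 𝔞)
    (hαΔ : ∀ i, α i ∈ Δ)
    (hindep : LinearIndependent ℝ α)
    (hfund : ∀ β ∈ Δ, ∃ c : Fin r → ℤ, β = ∑ i, (c i : ℝ) • α i ∧
      ((∀ i, 0 ≤ c i) ∨ (∀ i, c i ≤ 0)))
    (m : Fin r → ℕ) (hmpos : ∀ i, 0 < m i)
    (hδ : ∑ i, (m i : ℝ) • α i ∈ Δ)
    (hhigh : ∀ β ∈ Δ, ∀ c : Fin r → ℤ, β = ∑ i, (c i : ℝ) • α i → ∀ i, c i ≤ (m i : ℤ))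
    (d : Fin r → 𝔞) (hd : ∀ i j, ⟪d i, α j⟫ = if i = j then 1 else 0)
    (i₁ i₂ : Fin r) (hne : i₁ ≠ i₂) (hm1 : m i₁ = 1) (hm2 : m i₂ = 1)
    (Y : 𝔞) (hY : Y = (Real.pi / 2) • d i₁ + (Real.pi / 2) • d i₂)
    (SY : Set 𝔞) (hSY : SY = {lam | lam ∈ Δ ∧ ∃ k : ℤ, ⟪lam, Y⟫ = (k : ℝ) * Real.pi}) :
    IsFundamentalSystem SY (α '' {i | i ≠ i₁ ∧ i ≠ i₂} ∪ {-(∑ i, (m i : ℝ) • α i)}) ∧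
      Module.finrank ℝ ↥(Submodule.span ℝ SY) = r - 1 := by
  classical
  have hπ : Real.pi ≠ 0 := Real.pi_ne_zero
  set δ : 𝔞 := ∑ i, (m i : ℝ) • α i with hδdef
  clear_value δ
  have hαinj : Function.Injective α := hindep.injective
  haveI : Nonempty (Fin r) := ⟨i₁⟩
  -- Δ is closed under negation
  have hnegΔ : ∀ l ∈ Δ, -l ∈ Δ := by
    intro l hl
    have hlne : l ≠ 0 := fun h0 => hzero (h0 ▸ hl)
    have hnl : ‖l‖ ≠ 0 := norm_ne_zero_iff.2 hlne
    have h2 : 2 * ⟪l, l⟫ / ‖l‖ ^ 2 = 2 := by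
      rw [real_inner_self_eq_norm_sq]; field_simp
    have h := hrefl l hl l hl
    rw [h2] at h
    have heq : l - (2 : ℝ) • l = -l := by module
    rwa [heq] at h
  -- coefficient bounds
  have hbound : ∀ l ∈ Δ, ∀ c : Fin r → ℤ, l = ∑ i, (c i : ℝ) • α i →
      ∀ i, -(m i : ℤ) ≤ c i ∧ c i ≤ (m i : ℤ) := by
    intro l hl c hc i
    refine ⟨?_, hhigh l hl c hc i⟩
    have hneg : -l = ∑ i, ((-c i : ℤ) : ℝ) • α i := by
      rw [hc, ← Finset.sum_neg_distrib]
      refine Finset.sum_congr rfl fun j _ => ?_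
      push_cast; module
    have := hhigh (-l) (hnegΔ l hl) (fun i => -c i) hneg i
    omega
  -- inner products with Y
  have hαd : ∀ i t, ⟪α i, d t⟫ = if t = i then 1 else 0 := by
    intro i t; rw [real_inner_comm]; exact hd t i
  have hinnerY : ∀ c : Fin r → ℝ,
      ⟪∑ i, c i • α i, Y⟫ = (c i₁ + c i₂) * (Real.pi / 2) := by
    intro c
    have key : ∀ t, ⟪∑ i, c i • α i, d t⟫ = c t := by
      intro t
      rw [sum_inner]
      simp [real_inner_smul_left, hαd]
    rw [hY, inner_add_right, real_inner_smul_right, real_inner_smul_right, key, key]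
    ring
  have hδY : ⟪δ, Y⟫ = Real.pi := by
    have h := hinnerY (fun i => (m i : ℝ))
    rw [← hδdef] at h
    rw [h, hm1, hm2]
    push_cast
    ring
  -- the index finset avoiding i₁, i₂
  set F : Finset (Fin r) := Finset.univ.filter (fun j => j ≠ i₁ ∧ j ≠ i₂) with hF
  set g : 𝔞 → Fin r := Function.invFun α with hgdef
  have hg : ∀ j, g (α j) = j := fun j => Function.leftInverse_invFun hαinj j
  have hδne : ∀ j, α j ≠ -δ := by
    intro j hj
    have h0 : ∑ i, ((if i = j then (1 : ℝ) else 0) + m i) • α i = 0 := by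
      simp only [add_smul, Finset.sum_add_distrib, ite_smul, one_smul, zero_smul,
        Finset.sum_ite_eq', Finset.mem_univ, if_pos]
      rw [← hδdef, hj]
      simp
    have h1 := Fintype.linearIndependent_iff.mp hindep _ h0 j
    simp only [if_pos rfl] at h1
    have h2 : (1 + m j : ℕ) = 0 := by exact_mod_cast h1
    omega
  have hδnotim : -δ ∉ F.image α := by
    simp only [Finset.mem_image]
    rintro ⟨j, -, hj⟩
    exact hδne j hj
  have hFsum : ∀ f : Fin r → ℝ, f i₁ = 0 → f i₂ = 0 →
      ∑ j ∈ F, f j • α j = ∑ j, f j • α j := by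
    intro f h1 h2
    refine Finset.sum_filter_of_ne ?_
    intro j _ hne0
    constructor <;> rintro rfl <;> simp [h1, h2] at hne0
  -- B ⊆ SY
  have hBsub : (α '' {i | i ≠ i₁ ∧ i ≠ i₂} ∪ {-δ}) ⊆ SY := by
    rw [hSY]
    rintro x (⟨j, ⟨hj1, hj2⟩, rfl⟩ | rfl)
    · refine ⟨hαΔ j, 0, ?_⟩
      have hrep : α j = ∑ i, (if i = j then (1 : ℝ) else 0) • α i := by
        simp [ite_smul]
      rw [hrep, hinnerY]
      rw [if_neg (Ne.symm hj1), if_neg (Ne.symm hj2)]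
      norm_num
    · refine ⟨hnegΔ δ hδ, -1, ?_⟩
      rw [inner_neg_left, hδY]
      push_cast; ring
  -- the modified family β and its independence
  set β : Fin r → 𝔞 := fun j => if j = i₁ then -δ else α j with hβdef
  have hβindep : LinearIndependent ℝ β := by
    rw [Fintype.linearIndependent_iff]
    intro gg hgg
    have hdiff : ∀ j, gg j • β j = gg j • α j + (if j = i₁ then gg i₁ • (-δ - α i₁) else 0) := by
      intro j
      rcases eq_or_ne j i₁ with rfl | h
      · simp only [hβdef]
        simp only [if_pos rfl, if_true]
        module
      · simp [hβdef, h]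
    have hexp : -δ - α i₁ = ∑ j, (-(m j : ℝ) - if j = i₁ then 1 else 0) • α j := by
      rw [hδdef]
      simp only [sub_smul, neg_smul, Finset.sum_sub_distrib, Finset.sum_neg_distrib,
        ite_smul, one_smul, zero_smul, Finset.sum_ite_eq', Finset.mem_univ, if_pos]
    have h0 : ∑ j, (gg j + gg i₁ * (-(m j : ℝ) - if j = i₁ then 1 else 0)) • α j = 0 := by
      have e1 : ∑ j, (gg j + gg i₁ * (-(m j : ℝ) - if j = i₁ then 1 else 0)) • α j
          = ∑ j, gg j • α j + gg i₁ • ∑ j, (-(m j : ℝ) - if j = i₁ then 1 else 0) • α j := by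
        rw [Finset.smul_sum, ← Finset.sum_add_distrib]
        refine Finset.sum_congr rfl fun j _ => ?_
        rw [add_smul, smul_smul]
      rw [e1, ← hexp]
      have e2 : ∑ j, gg j • α j + gg i₁ • (-δ - α i₁) = ∑ j, gg j • β j := by
        rw [Finset.sum_congr rfl fun j _ => hdiff j, Finset.sum_add_distrib,
          Finset.sum_ite_eq' Finset.univ i₁ (fun _ => gg i₁ • (-δ - α i₁))]
        simp
      rw [e2, hgg]
    have hz := Fintype.linearIndependent_iff.mp hindep _ h0
    have hgi : gg i₁ = 0 := by
      have h1 := hz i₁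
      rw [if_pos rfl, hm1] at h1
      push_cast at h1
      linarith
    intro j
    have h1 := hz j
    rw [hgi] at h1
    simpa using h1
  -- the subtype family
  have hγindep : LinearIndependent ℝ (fun j : {i : Fin r // i ≠ i₂} => β (j : Fin r)) :=
    hβindep.comp _ Subtype.val_injective
  have hrange : Set.range (fun j : {i : Fin r // i ≠ i₂} => β (j : Fin r))
      = α '' {i | i ≠ i₁ ∧ i ≠ i₂} ∪ {-δ} := by
    ext x
    simp only [Set.mem_range, Set.mem_union, Set.mem_image, Set.mem_setOf_eq,
      Set.mem_singleton_iff, Subtype.exists]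
    constructor
    · rintro ⟨j, hj, rfl⟩
      by_cases h : j = i₁
      · right; simp [hβdef, h]
      · left; exact ⟨j, ⟨h, hj⟩, by simp [hβdef, h]⟩
    · rintro (⟨j, ⟨h1, h2⟩, rfl⟩ | rfl)
      · exact ⟨j, h2, by simp [hβdef, h1]⟩
      · exact ⟨i₁, hne, by simp [hβdef]⟩
  have hBindep : LinearIndependent ℝ
      ((↑) : (α '' {i | i ≠ i₁ ∧ i ≠ i₂} ∪ {-δ} : Set 𝔞) → 𝔞) := by
    rw [← hrange]
    exact hγindep.linearIndepOn_id
  -- the decomposition of elements of SY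
  have hdecomp : ∀ l ∈ SY, ∃ (s : Finset 𝔞) (cc : 𝔞 → ℤ),
      (↑s : Set 𝔞) ⊆ α '' {i | i ≠ i₁ ∧ i ≠ i₂} ∪ {-δ} ∧
      l = ∑ x ∈ s, (cc x : ℝ) • x ∧ ((∀ x ∈ s, 0 ≤ cc x) ∨ (∀ x ∈ s, cc x ≤ 0)) := by
    intro l hl
    rw [hSY] at hl
    obtain ⟨hlΔ, k, hk⟩ := hl
    obtain ⟨c, hcl, hsign⟩ := hfund l hlΔ
    have hck : ((c i₁ : ℝ) + (c i₂ : ℝ)) = 2 * k := by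
      have h1 := hinnerY (fun i => (c i : ℝ))
      rw [← hcl] at h1
      rw [h1] at hk
      have h2 : ((c i₁ : ℝ) + (c i₂ : ℝ)) * (Real.pi / 2) = (2 * k) * (Real.pi / 2) := by
        rw [hk]; ring
      exact mul_right_cancel₀ (div_ne_zero hπ two_ne_zero) h2
    have hck' : c i₁ + c i₂ = 2 * k := by exact_mod_cast hck
    obtain ⟨hb1l, hb1u⟩ := hbound l hlΔ c hcl i₁
    obtain ⟨hb2l, hb2u⟩ := hbound l hlΔ c hcl i₂
    rw [hm1] at hb1l hb1u
    rw [hm2] at hb2l hb2u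
    have hcases : (c i₁ = 0 ∧ c i₂ = 0) ∨ (c i₁ = 1 ∧ c i₂ = 1) ∨ (c i₁ = -1 ∧ c i₂ = -1) := by
      rcases hsign with h | h
      · have h1 := h i₁; have h2 := h i₂; omega
      · have h1 := h i₁; have h2 := h i₂; omega
    rcases hcases with ⟨h1, h2⟩ | ⟨h1, h2⟩ | ⟨h1, h2⟩
    · -- c i₁ = c i₂ = 0
      refine ⟨F.image α, fun x => c (g x), ?_, ?_, ?_⟩
      · intro x hx
        simp only [Finset.coe_image, Set.mem_image, Finset.mem_coe, hF,
          Finset.mem_filter] at hx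
        obtain ⟨j, hj, rfl⟩ := hx
        exact Or.inl ⟨j, ⟨hj.2.1, hj.2.2⟩, rfl⟩
      · rw [Finset.sum_image (fun a _ b _ h => hαinj h)]
        simp only [hg]
        rw [hcl, ← hFsum (fun j => (c j : ℝ)) (by simp [h1]) (by simp [h2])]
      · rcases hsign with h | h
        · left; intro x hx
          obtain ⟨j, -, rfl⟩ := Finset.mem_image.mp hx
          simp only [hg]; exact h j
        · right; intro x hx
          obtain ⟨j, -, rfl⟩ := Finset.mem_image.mp hx
          simp only [hg]; exact h j
    · -- c i₁ = c i₂ = 1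
      refine ⟨insert (-δ) (F.image α),
        fun x => if x = -δ then -1 else c (g x) - m (g x), ?_, ?_, ?_⟩
      · intro x hx
        simp only [Finset.coe_insert, Set.mem_insert_iff, Finset.mem_coe] at hx
        rcases hx with rfl | hx
        · exact Or.inr rfl
        · obtain ⟨j, hj, rfl⟩ := Finset.mem_image.mp hx
          rw [hF, Finset.mem_filter] at hj
          exact Or.inl ⟨j, ⟨hj.2.1, hj.2.2⟩, rfl⟩
      · rw [Finset.sum_insert hδnotim]
        beta_reduce
        rw [if_pos rfl]
        have hrest : ∑ x ∈ F.image α,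
            (((if x = -δ then -1 else c (g x) - m (g x) : ℤ)) : ℝ) • x
            = ∑ j ∈ F, ((c j - m j : ℤ) : ℝ) • α j := by
          rw [Finset.sum_image (fun a _ b _ h => hαinj h)]
          refine Finset.sum_congr rfl fun j _ => ?_
          rw [if_neg (hδne j), hg]
        rw [hrest,
          hFsum (fun j => ((c j - m j : ℤ) : ℝ)) (by simp [h1, hm1]) (by simp [h2, hm2])]
        have hfirst : ((-1 : ℤ) : ℝ) • (-δ) = δ := by push_cast; module
        have key : δ + ∑ j, ((c j - m j : ℤ) : ℝ) • α j = ∑ j, (c j : ℝ) • α j := by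
          rw [hδdef, ← Finset.sum_add_distrib]
          refine Finset.sum_congr rfl fun j _ => ?_
          push_cast; module
        rw [hfirst, hcl, key]
      · right
        intro x hx
        rcases Finset.mem_insert.mp hx with rfl | hx
        · beta_reduce; rw [if_pos rfl]; omega
        · obtain ⟨j, -, rfl⟩ := Finset.mem_image.mp hx
          beta_reduce; rw [if_neg (hδne j), hg]
          have := (hbound l hlΔ c hcl j).2
          omega
    · -- c i₁ = c i₂ = -1
      refine ⟨insert (-δ) (F.image α),
        fun x => if x = -δ then 1 else c (g x) + m (g x), ?_, ?_, ?_⟩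
      · intro x hx
        simp only [Finset.coe_insert, Set.mem_insert_iff, Finset.mem_coe] at hx
        rcases hx with rfl | hx
        · exact Or.inr rfl
        · obtain ⟨j, hj, rfl⟩ := Finset.mem_image.mp hx
          rw [hF, Finset.mem_filter] at hj
          exact Or.inl ⟨j, ⟨hj.2.1, hj.2.2⟩, rfl⟩
      · rw [Finset.sum_insert hδnotim]
        beta_reduce
        rw [if_pos rfl]
        have hrest : ∑ x ∈ F.image α,
            (((if x = -δ then 1 else c (g x) + m (g x) : ℤ)) : ℝ) • x
            = ∑ j ∈ F, ((c j + m j : ℤ) : ℝ) • α j := by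
          rw [Finset.sum_image (fun a _ b _ h => hαinj h)]
          refine Finset.sum_congr rfl fun j _ => ?_
          rw [if_neg (hδne j), hg]
        rw [hrest,
          hFsum (fun j => ((c j + m j : ℤ) : ℝ)) (by simp [h1, hm1]) (by simp [h2, hm2])]
        have hfirst : ((1 : ℤ) : ℝ) • (-δ) = -δ := by push_cast; module
        have key : -δ + ∑ j, ((c j + m j : ℤ) : ℝ) • α j = ∑ j, (c j : ℝ) • α j := by
          have hsum : ∑ j, ((c j + m j : ℤ) : ℝ) • α j = δ + ∑ j, (c j : ℝ) • α j := by
            rw [hδdef, ← Finset.sum_add_distrib]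
            refine Finset.sum_congr rfl fun j _ => ?_
            push_cast; module
          rw [hsum]; abel
        rw [hfirst, hcl, key]
      · left
        intro x hx
        rcases Finset.mem_insert.mp hx with rfl | hx
        · beta_reduce; rw [if_pos rfl]; omega
        · obtain ⟨j, -, rfl⟩ := Finset.mem_image.mp hx
          beta_reduce; rw [if_neg (hδne j), hg]
          have := (hbound l hlΔ c hcl j).1
          omega
  -- span equality
  have hspanB : Submodule.span ℝ SY
      = Submodule.span ℝ (α '' {i | i ≠ i₁ ∧ i ≠ i₂} ∪ {-δ}) := by
    apply le_antisymm
    · rw [Submodule.span_le]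
      intro l hl
      obtain ⟨s, cc, hsub, hl', -⟩ := hdecomp l hl
      rw [hl']
      exact Submodule.sum_smul_mem _ _ (fun x hx => Submodule.subset_span (hsub hx))
    · exact Submodule.span_mono hBsub
  refine ⟨⟨hBsub, hBindep, hdecomp⟩, ?_⟩
  rw [hspanB, ← hrange, finrank_span_eq_card hγindep]
  have hcard : Fintype.card {i : Fin r // i ≠ i₂} = r - 1 := by
    have := Fintype.card_subtype_compl (fun i : Fin r => i = i₂)
    simp only [Fintype.card_subtype_eq, Fintype.card_fin] at this
    convert this using 2
  rw [hcard]
end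

section
/- In ℝ^{r+1} with the standard inner product, let Δ = A_r = {e_i − e_j : 1 ≤ i ≠ j ≤ r+1}, with fundamental system Π = {α_i = e_i − e_{i+1} : 1 ≤ i ≤ r}, dual vectors α^l in span(Δ) determined by ⟨α^l, α_j⟩ = δ_{lj}, and Σ_Y = {λ ∈ Δ : ⟨λ,Y⟩ ∈ πℤ}. Then: (a) for every 1 ≤ i ≤ r there exists a linear isometry f of ℝ^{r+1} with f(Δ) = Δ and f(Σ_{(π/2)α^i}) = Σ_{(π/2)α^{r+1−i}}; (b) for every 1 ≤ j < k ≤ r there exists a linear isometry g of ℝ^{r+1}, given by a permutation of the standard basis vectors, with g(Δ) = Δ and g(Σ_{(π/2)(α^j + α^k)}) = Σ_{(π/2)α^{k−j}}. -/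
/-!
If `w = c - L` with `L` integer-valued, then `⟪e a - e b, (π/2) w⟫ = (π/2)(L b - L a)`, so
`Σ_{(π/2) w}` consists of the roots `e a - e b` with `L a ≡ L b (mod 2)`: it only depends on the
parity classes of `L`, and a coordinate permutation moves these classes along. A vector dual to the
simple roots with `⟪d, α_p⟫ = δ_{pm}` has `L = [· > m]`. Reversing the coordinates turns the step
at `m` into the complementary step at `r - 1 - m`, which is (a). For (b), `αʲ + αᵏ` has odd level
exactly on the block `{j+1, …, k}`, and the cyclic shift by `j + 1` carries this block onto
`{0, …, k - j - 1}`, the lower block of `α^{k-j}`.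
-/

open RealInnerProductSpace

namespace RootSystemA

section General

variable {E : Type*} [NormedAddCommGroup E] [InnerProductSpace ℝ E]

/-- The set `Σ_Y = {λ ∈ Δ : ⟪λ, Y⟫ ∈ πℤ}`. -/
def piIntegralRoots (Δ : Set E) (Y : E) : Set E :=
  {lam | lam ∈ Δ ∧ ∃ k : ℤ, ⟪lam, Y⟫ = (k : ℝ) * Real.pi}

theorem image_piIntegralRoots (f : E ≃ₗᵢ[ℝ] E) (Δ : Set E) (Y : E) :
    f '' piIntegralRoots Δ Y = piIntegralRoots (f '' Δ) (f Y) := by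
  ext v
  constructor
  · rintro ⟨w, ⟨hwΔ, k, hk⟩, rfl⟩
    exact ⟨⟨w, hwΔ, rfl⟩, k, by rwa [f.inner_map_map]⟩
  · rintro ⟨⟨w, hwΔ, rfl⟩, k, hk⟩
    exact ⟨w, ⟨hwΔ, k, by rwa [f.inner_map_map] at hk⟩, rfl⟩

end General

variable {ι : Type*} [Fintype ι]

theorem piLpCongrLeft_apply_apply (σ : Equiv.Perm ι) (v : EuclideanSpace ℝ ι) (x : ι) :
    LinearIsometryEquiv.piLpCongrLeft 2 ℝ ℝ σ v x = v (σ.symm x) :=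
  rfl

variable [DecidableEq ι]

def roots (ι : Type*) [Fintype ι] [DecidableEq ι] : Set (EuclideanSpace ℝ ι) :=
  {v | ∃ a b : ι, a ≠ b ∧ v = EuclideanSpace.single a 1 - EuclideanSpace.single b 1}

theorem inner_single_sub_single (w : EuclideanSpace ℝ ι) (a b : ι) :
    ⟪EuclideanSpace.single a 1 - EuclideanSpace.single b 1, w⟫ = w a - w b := by
  simp [inner_sub_left, EuclideanSpace.inner_single_left]

theorem piLpCongrLeft_image_roots_subset (σ : Equiv.Perm ι) :
    LinearIsometryEquiv.piLpCongrLeft 2 ℝ ℝ σ '' roots ι ⊆ roots ι := by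
  rintro _ ⟨_, ⟨a, b, hab, rfl⟩, rfl⟩
  exact ⟨σ a, σ b, σ.injective.ne hab, by simp⟩

theorem piLpCongrLeft_image_roots (σ : Equiv.Perm ι) :
    LinearIsometryEquiv.piLpCongrLeft 2 ℝ ℝ σ '' roots ι = roots ι := by
  refine (piLpCongrLeft_image_roots_subset σ).antisymm fun v hv => ?_
  refine ⟨_, piLpCongrLeft_image_roots_subset σ.symm ⟨v, hv, rfl⟩, ?_⟩
  rw [← LinearIsometryEquiv.piLpCongrLeft_symm, LinearIsometryEquiv.apply_symm_apply]

theorem exists_int_cast_eq_two_mul_iff (z : ℤ) :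
    (∃ k : ℤ, (z : ℝ) = 2 * k) ↔ z % 2 = 0 := by
  constructor
  · rintro ⟨k, hk⟩
    have : z = 2 * k := by exact_mod_cast hk
    omega
  · intro h
    exact ⟨z / 2, by exact_mod_cast (Int.mul_ediv_cancel' (Int.dvd_of_emod_eq_zero h)).symm⟩

theorem exists_inner_half_pi_smul_iff {w : EuclideanSpace ℝ ι} {c : ℝ} {L : ι → ℤ}
    (hw : ∀ x, w x = c - L x) (a b : ι) :
    (∃ k : ℤ, ⟪EuclideanSpace.single a 1 - EuclideanSpace.single b 1, (Real.pi / 2) • w⟫ =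
        (k : ℝ) * Real.pi) ↔ L a % 2 = L b % 2 := by
  have hinner : ⟪EuclideanSpace.single a 1 - EuclideanSpace.single b 1, (Real.pi / 2) • w⟫ =
      Real.pi / 2 * ((L b - L a : ℤ) : ℝ) := by
    rw [real_inner_smul_right, inner_single_sub_single, hw, hw]
    push_cast
    ring
  rw [hinner]
  calc (∃ k : ℤ, Real.pi / 2 * ((L b - L a : ℤ) : ℝ) = k * Real.pi)
      ↔ ∃ k : ℤ, ((L b - L a : ℤ) : ℝ) = 2 * k := by
        refine exists_congr fun k => ⟨fun h => ?_, fun h => by rw [h]; ring⟩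
        field_simp at h
        linarith
    _ ↔ L a % 2 = L b % 2 := by
        rw [exists_int_cast_eq_two_mul_iff]
        omega

theorem piIntegralRoots_congr {w w' : EuclideanSpace ℝ ι} {c c' : ℝ} {L L' : ι → ℤ}
    (hw : ∀ x, w x = c - L x) (hw' : ∀ x, w' x = c' - L' x)
    (hL : ∀ a b, L a % 2 = L b % 2 ↔ L' a % 2 = L' b % 2) :
    piIntegralRoots (roots ι) ((Real.pi / 2) • w) =
      piIntegralRoots (roots ι) ((Real.pi / 2) • w') := by
  ext v
  constructor
  · rintro ⟨⟨a, b, hab, rfl⟩, h⟩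
    refine ⟨⟨a, b, hab, rfl⟩, ?_⟩
    rwa [exists_inner_half_pi_smul_iff hw', ← hL, ← exists_inner_half_pi_smul_iff hw]
  · rintro ⟨⟨a, b, hab, rfl⟩, h⟩
    refine ⟨⟨a, b, hab, rfl⟩, ?_⟩
    rwa [exists_inner_half_pi_smul_iff hw, hL, ← exists_inner_half_pi_smul_iff hw']

theorem piLpCongrLeft_image_piIntegralRoots_roots (σ : Equiv.Perm ι) (w : EuclideanSpace ℝ ι) :
    LinearIsometryEquiv.piLpCongrLeft 2 ℝ ℝ σ '' piIntegralRoots (roots ι) ((Real.pi / 2) • w) =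
      piIntegralRoots (roots ι) ((Real.pi / 2) • LinearIsometryEquiv.piLpCongrLeft 2 ℝ ℝ σ w) := by
  rw [image_piIntegralRoots, piLpCongrLeft_image_roots, map_smul]

variable {r : ℕ}

def step (m : Fin r) (x : Fin (r + 1)) : ℤ := if (m : ℕ) < x then 1 else 0

theorem apply_eq_sub_step {d : EuclideanSpace ℝ (Fin (r + 1))} {m : Fin r}
    (hd : ∀ p : Fin r, ⟪d, EuclideanSpace.single p.castSucc 1 - EuclideanSpace.single p.succ 1⟫ =
      if p = m then 1 else 0) (x : Fin (r + 1)) :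
    d x = d 0 - step m x := by
  induction x using Fin.induction with
  | zero => simp [step]
  | succ p ih =>
    have hp := hd p
    rw [real_inner_comm, inner_single_sub_single] at hp
    simp only [step, Fin.val_castSucc, Fin.val_succ] at ih ⊢
    by_cases hpm : p = m
    · subst hpm
      simp only [if_true, lt_irrefl, if_false] at hp ih
      simp only [Nat.lt_succ_self, if_true]
      push_cast at ih ⊢
      linarith
    · rw [if_neg hpm] at hp
      have : (m : ℕ) < p + 1 ↔ (m : ℕ) < p := by
        have : (m : ℕ) ≠ p := fun h => hpm (Fin.ext h.symm)
        omega
      rw [if_congr this rfl rfl]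
      linarith

theorem step_rev (i : Fin r) (x : Fin (r + 1)) : step i x.rev = 1 - step i.rev x := by
  simp only [step, Fin.val_rev]
  split_ifs <;> omega

theorem step_add_add_step_add_emod_two {j k t : Fin r} {c : Fin (r + 1)}
    (hc : (c : ℕ) = j + 1) (htk : (t : ℕ) + j + 1 = k) (x : Fin (r + 1)) :
    (step j (x + c) + step k (x + c)) % 2 = 1 - step t x := by
  simp only [step, Fin.val_add_eq_ite, hc]
  have := x.isLt
  split_ifs <;> omega

end RootSystemA

open RootSystemA in
/-- **Equivalences among the sets `Σ_Y` for `Δ = A_r`.**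
(a) For every `i` (0-based index in `Fin r`), there is a linear isometry `f` of `ℝ^{r+1}`
with `f(Δ) = Δ` carrying `Σ_{(π/2)αⁱ}` onto `Σ_{(π/2)α^{rev i}}` (where `rev` corresponds
to the 1-based index `r + 1 − i`).
(b) For 1-based `j < k`, there is a linear isometry `g` given by a permutation of the
standard basis vectors, with `g(Δ) = Δ`, carrying `Σ_{(π/2)(αʲ + αᵏ)}` onto
`Σ_{(π/2)α^{k−j}}`. -/
theorem stmt_7 (r : ℕ)
    (e : Fin (r + 1) → EuclideanSpace ℝ (Fin (r + 1)))
    (he : ∀ i, e i = EuclideanSpace.single i (1 : ℝ))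
    (Δ : Set (EuclideanSpace ℝ (Fin (r + 1))))
    (hΔ : Δ = {v | ∃ i j : Fin (r + 1), i ≠ j ∧ v = e i - e j})
    (α : Fin r → EuclideanSpace ℝ (Fin (r + 1)))
    (hα : ∀ i : Fin r, α i = e i.castSucc - e i.succ) :
    (∀ (i : Fin r) (d₁ d₂ : EuclideanSpace ℝ (Fin (r + 1))),
      d₁ ∈ Submodule.span ℝ Δ → d₂ ∈ Submodule.span ℝ Δ →
      (∀ j : Fin r, ⟪d₁, α j⟫ = if j = i then 1 else 0) →
      (∀ j : Fin r, ⟪d₂, α j⟫ = if j = i.rev then 1 else 0) →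
      ∃ f : EuclideanSpace ℝ (Fin (r + 1)) ≃ₗᵢ[ℝ] EuclideanSpace ℝ (Fin (r + 1)),
        f '' Δ = Δ ∧
        f '' {lam | lam ∈ Δ ∧ ∃ k : ℤ, ⟪lam, (Real.pi / 2) • d₁⟫ = (k : ℝ) * Real.pi} =
          {lam | lam ∈ Δ ∧ ∃ k : ℤ, ⟪lam, (Real.pi / 2) • d₂⟫ = (k : ℝ) * Real.pi}) ∧
    (∀ (j k t : Fin r), j < k → (t : ℕ) + (j : ℕ) + 1 = (k : ℕ) →
      ∀ d₁ d₂ d₃ : EuclideanSpace ℝ (Fin (r + 1)),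
      d₁ ∈ Submodule.span ℝ Δ → d₂ ∈ Submodule.span ℝ Δ → d₃ ∈ Submodule.span ℝ Δ →
      (∀ p : Fin r, ⟪d₁, α p⟫ = if p = j then 1 else 0) →
      (∀ p : Fin r, ⟪d₂, α p⟫ = if p = k then 1 else 0) →
      (∀ p : Fin r, ⟪d₃, α p⟫ = if p = t then 1 else 0) →
      ∃ g : EuclideanSpace ℝ (Fin (r + 1)) ≃ₗᵢ[ℝ] EuclideanSpace ℝ (Fin (r + 1)),
        (∃ σ : Equiv.Perm (Fin (r + 1)), ∀ p, g (e p) = e (σ p)) ∧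
        g '' Δ = Δ ∧
        g '' {lam | lam ∈ Δ ∧
            ∃ c : ℤ, ⟪lam, (Real.pi / 2) • (d₁ + d₂)⟫ = (c : ℝ) * Real.pi} =
          {lam | lam ∈ Δ ∧ ∃ c : ℤ, ⟪lam, (Real.pi / 2) • d₃⟫ = (c : ℝ) * Real.pi}) := by
  obtain rfl : e = fun i => EuclideanSpace.single i 1 := funext he
  obtain rfl : α = fun i => EuclideanSpace.single i.castSucc 1 - EuclideanSpace.single i.succ 1 :=
    funext hα
  obtain rfl : Δ = roots (Fin (r + 1)) := hΔ
  refine ⟨fun i d₁ d₂ _ _ hd₁ hd₂ => ?_, fun j k t _ htk d₁ d₂ d₃ _ _ _ hd₁ hd₂ hd₃ => ?_⟩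
  · let f := LinearIsometryEquiv.piLpCongrLeft 2 ℝ ℝ (Fin.revPerm (n := r + 1))
    refine ⟨f, piLpCongrLeft_image_roots _,
      (piLpCongrLeft_image_piIntegralRoots_roots _ _).trans ?_⟩
    refine piIntegralRoots_congr (L := fun x => step i x.rev) (c := d₁ 0) (fun x => ?_)
      (apply_eq_sub_step hd₂) fun a b => ?_
    · rw [piLpCongrLeft_apply_apply, Fin.revPerm_symm]
      exact apply_eq_sub_step hd₁ x.rev
    · simp only [step_rev]
      omega
  · let c : Fin (r + 1) := ⟨j + 1, by omega⟩
    let σ := (Equiv.addRight c).symm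
    let g := LinearIsometryEquiv.piLpCongrLeft 2 ℝ ℝ σ
    refine ⟨g, ⟨σ, fun p => EuclideanSpace.piLpCongrLeft_single σ p 1⟩,
      piLpCongrLeft_image_roots σ, (piLpCongrLeft_image_piIntegralRoots_roots σ _).trans ?_⟩
    refine piIntegralRoots_congr (L := fun x => step j (x + c) + step k (x + c))
      (c := d₁ 0 + d₂ 0) (fun x => ?_) (apply_eq_sub_step hd₃) fun a b => ?_
    · rw [map_add, PiLp.add_apply, piLpCongrLeft_apply_apply, piLpCongrLeft_apply_apply]
      simp only [σ, Equiv.symm_symm, Equiv.coe_addRight]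
      rw [apply_eq_sub_step hd₁, apply_eq_sub_step hd₂]
      push_cast
      ring
    · have ha := step_add_add_step_add_emod_two (c := c) rfl htk a
      have hb := step_add_add_step_add_emod_two (c := c) rfl htk b
      omega
end

section
/- In ℝ^r with the standard inner product, let Δ = B_r = {±e_i : 1 ≤ i ≤ r} ∪ {±e_i ± e_j : 1 ≤ i < j ≤ r} (r ≥ 2), with fundamental system Π = {α_i = e_i − e_{i+1} : 1 ≤ i ≤ r−1} ∪ {α_r = e_r}, and let α^l ∈ ℝ^r be determined by ⟨α^l, α_j⟩ = δ_{lj}. Then for every 1 ≤ l ≤ r, with Y = (π/2)α^l, Σ_Y = {±e_i ± e_j : 1 ≤ i < j ≤ l} ∪ {±e_i : l < i ≤ r} ∪ {±e_i ± e_j : l < i < j ≤ r}; that is, Σ_Y is the root system D_l (the long roots on the first l coordinates) joined with B_{r−l} (on the last r−l coordinates). -/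
/-!
Back-substitution from `α_r = e_r` shows that the dual vector `αˡ` is `e_1 + ⋯ + e_l`, so
`⟨λ, Y⟩` is `π/2` times the sum of the coordinates of `λ` among the first `l`. For a root of `B_r`
this sum is an odd number exactly when `λ` has one nonzero coordinate among the first `l`;
otherwise it is `0` or `±2`.
-/

open RealInnerProductSpace

lemma apply_eq_ite_le_of_sub_succ {m : ℕ} (d : Fin (m + 1) → ℝ) (l : Fin (m + 1))
    (hsucc : ∀ i : Fin m, d i.castSucc - d i.succ = if i.castSucc = l then 1 else 0)
    (hlast : d (Fin.last m) = if Fin.last m = l then 1 else 0) (i : Fin (m + 1)) :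
    d i = if i ≤ l then 1 else 0 := by
  induction i using Fin.reverseInduction with
  | last =>
    simp [hlast, Fin.last_le_iff, eq_comm]
  | cast i ih =>
    rw [eq_add_of_sub_eq (hsucc i), ih]
    simp only [Fin.ext_iff, Fin.le_def, Fin.val_castSucc, Fin.val_succ]
    split_ifs <;> first | omega | norm_num

lemma not_exists_int_sign_mul_pi_div_two {s : ℝ} (hs : s = 1 ∨ s = -1) :
    ¬ ∃ k : ℤ, s * (Real.pi / 2) = k * Real.pi := by
  rintro ⟨k, hk⟩
  have h2k : (2 * k : ℝ) = s := by nlinarith [Real.pi_pos]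
  rcases hs with rfl | rfl <;> norm_cast at h2k <;> omega

lemma exists_int_sign_add_sign_mul_pi_div_two {s t : ℝ} (hs : s = 1 ∨ s = -1)
    (ht : t = 1 ∨ t = -1) : ∃ k : ℤ, (s + t) * (Real.pi / 2) = k * Real.pi := by
  rcases hs with rfl | rfl <;> rcases ht with rfl | rfl
  exacts [⟨1, by ring⟩, ⟨0, by ring⟩, ⟨0, by ring⟩, ⟨-1, by push_cast; ring⟩]

section

variable {ι : Type*} [Fintype ι] [LinearOrder ι] {l : ι}
  {Y : EuclideanSpace ℝ ι} (hY : ∀ i, Y i = if i ≤ l then Real.pi / 2 else 0)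
include hY

lemma exists_int_inner_smul_single_iff {s : ℝ} (hs : s = 1 ∨ s = -1) (i : ι) :
    (∃ k : ℤ, ⟪s • EuclideanSpace.single i (1 : ℝ), Y⟫ = k * Real.pi) ↔ l < i := by
  rw [real_inner_smul_left, EuclideanSpace.inner_single_left, hY, ← not_le]
  by_cases hi : i ≤ l
  · simpa [hi] using not_exists_int_sign_mul_pi_div_two hs
  · simp [hi]

lemma exists_int_inner_add_iff {s t : ℝ} (hs : s = 1 ∨ s = -1) (ht : t = 1 ∨ t = -1)
    {i j : ι} (hij : i < j) :
    (∃ k : ℤ, ⟪s • EuclideanSpace.single i (1 : ℝ) + t • EuclideanSpace.single j 1, Y⟫ =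
      k * Real.pi) ↔ j ≤ l ∨ l < i := by
  simp only [inner_add_left, real_inner_smul_left, EuclideanSpace.inner_single_left, hY]
  rw [← not_le]
  by_cases hj : j ≤ l
  · simpa [hj, hij.le.trans hj, add_mul] using exists_int_sign_add_sign_mul_pi_div_two hs ht
  by_cases hi : i ≤ l
  · simpa [hi, hj] using not_exists_int_sign_mul_pi_div_two hs
  · simp [hi, hj]

end

theorem stmt_8_general (m : ℕ)
    (e : Fin (m + 1) → EuclideanSpace ℝ (Fin (m + 1)))
    (he : ∀ i, e i = EuclideanSpace.single i (1 : ℝ))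
    (Δ : Set (EuclideanSpace ℝ (Fin (m + 1))))
    (hΔ : Δ = {v | ∃ (s : ℝ) (i : Fin (m + 1)), (s = 1 ∨ s = -1) ∧ v = s • e i} ∪
      {v | ∃ (s t : ℝ) (i j : Fin (m + 1)), (s = 1 ∨ s = -1) ∧ (t = 1 ∨ t = -1) ∧
        i < j ∧ v = s • e i + t • e j})
    (α : Fin (m + 1) → EuclideanSpace ℝ (Fin (m + 1)))
    (hα : ∀ i : Fin m, α i.castSucc = e i.castSucc - e i.succ)
    (hαlast : α (Fin.last m) = e (Fin.last m))
    (l : Fin (m + 1))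
    (d : EuclideanSpace ℝ (Fin (m + 1)))
    (hd : ∀ j, ⟪d, α j⟫ = if j = l then 1 else 0)
    (Y : EuclideanSpace ℝ (Fin (m + 1))) (hY : Y = (Real.pi / 2) • d) :
    {lam | lam ∈ Δ ∧ ∃ k : ℤ, ⟪lam, Y⟫ = (k : ℝ) * Real.pi} =
      {v | ∃ (s t : ℝ) (i j : Fin (m + 1)), (s = 1 ∨ s = -1) ∧ (t = 1 ∨ t = -1) ∧
        i < j ∧ (j : ℕ) ≤ (l : ℕ) ∧ v = s • e i + t • e j} ∪
      {v | ∃ (s : ℝ) (i : Fin (m + 1)), (s = 1 ∨ s = -1) ∧ (l : ℕ) < (i : ℕ) ∧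
        v = s • e i} ∪
      {v | ∃ (s t : ℝ) (i j : Fin (m + 1)), (s = 1 ∨ s = -1) ∧ (t = 1 ∨ t = -1) ∧
        (l : ℕ) < (i : ℕ) ∧ i < j ∧ v = s • e i + t • e j} := by
  have hde : ∀ i, ⟪d, e i⟫ = d i := fun i => by simp [he, EuclideanSpace.inner_single_right]
  have hd_apply : ∀ i, d i = if i ≤ l then 1 else 0 :=
    apply_eq_ite_le_of_sub_succ d l
      (fun i => by simpa [hα, inner_sub_right, hde] using hd i.castSucc)
      (by simpa [hαlast, hde] using hd (Fin.last m))
  have hYi : ∀ i, Y i = if i ≤ l then Real.pi / 2 else 0 := fun i => by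
    simp [hY, hd_apply]
  obtain rfl : e = fun i => EuclideanSpace.single i 1 := funext he
  subst hΔ
  ext v
  simp only [Set.mem_ofPred_eq, Set.mem_union, ← Fin.lt_def, ← Fin.le_def]
  constructor
  · rintro ⟨⟨s, i, hs, rfl⟩ | ⟨s, t, i, j, hs, ht, hij, rfl⟩, hk⟩
    · exact .inl (.inr ⟨s, i, hs, (exists_int_inner_smul_single_iff hYi hs i).1 hk, rfl⟩)
    · rcases (exists_int_inner_add_iff hYi hs ht hij).1 hk with hj | hi
      · exact .inl (.inl ⟨s, t, i, j, hs, ht, hij, hj, rfl⟩)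
      · exact .inr ⟨s, t, i, j, hs, ht, hi, hij, rfl⟩
  · rintro ((⟨s, t, i, j, hs, ht, hij, hj, rfl⟩ | ⟨s, i, hs, hi, rfl⟩) |
      ⟨s, t, i, j, hs, ht, hi, hij, rfl⟩)
    · exact ⟨.inr ⟨s, t, i, j, hs, ht, hij, rfl⟩,
        (exists_int_inner_add_iff hYi hs ht hij).2 (.inl hj)⟩
    · exact ⟨.inl ⟨s, i, hs, rfl⟩, (exists_int_inner_smul_single_iff hYi hs i).2 hi⟩
    · exact ⟨.inr ⟨s, t, i, j, hs, ht, hij, rfl⟩,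
        (exists_int_inner_add_iff hYi hs ht hij).2 (.inr hi)⟩

/-- **Computation of `Σ_Y` for `Δ = B_r` (`r = m + 1 ≥ 2`) and `Y = (π/2) αˡ`.**
With the standard basis `e` of `ℝ^r`, `Δ = {±e_i} ∪ {±e_i ± e_j : i < j}`, simple roots
`α_i = e_i − e_{i+1}` (for `i < r − 1`) and `α_{r−1} = e_{r−1}` (0-based), and `d = αˡ`
the dual vector of the simple root with 0-based index `l`, we have
`Σ_Y = {±e_i ± e_j : i < j ≤ l} ∪ {±e_i : l < i} ∪ {±e_i ± e_j : l < i < j}`,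
i.e. the root system `D_{l+1}` (long roots on the first `l+1` coordinates) joined with
`B_{r−l−1}` on the remaining coordinates. -/
theorem stmt_8 (m : ℕ) (hm : 1 ≤ m)
    (e : Fin (m + 1) → EuclideanSpace ℝ (Fin (m + 1)))
    (he : ∀ i, e i = EuclideanSpace.single i (1 : ℝ))
    (Δ : Set (EuclideanSpace ℝ (Fin (m + 1))))
    (hΔ : Δ = {v | ∃ (s : ℝ) (i : Fin (m + 1)), (s = 1 ∨ s = -1) ∧ v = s • e i} ∪
      {v | ∃ (s t : ℝ) (i j : Fin (m + 1)), (s = 1 ∨ s = -1) ∧ (t = 1 ∨ t = -1) ∧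
        i < j ∧ v = s • e i + t • e j})
    (α : Fin (m + 1) → EuclideanSpace ℝ (Fin (m + 1)))
    (hα : ∀ i : Fin m, α i.castSucc = e i.castSucc - e i.succ)
    (hαlast : α (Fin.last m) = e (Fin.last m))
    (l : Fin (m + 1))
    (d : EuclideanSpace ℝ (Fin (m + 1)))
    (hd : ∀ j, ⟪d, α j⟫ = if j = l then 1 else 0)
    (Y : EuclideanSpace ℝ (Fin (m + 1))) (hY : Y = (Real.pi / 2) • d) :
    {lam | lam ∈ Δ ∧ ∃ k : ℤ, ⟪lam, Y⟫ = (k : ℝ) * Real.pi} =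
      {v | ∃ (s t : ℝ) (i j : Fin (m + 1)), (s = 1 ∨ s = -1) ∧ (t = 1 ∨ t = -1) ∧
        i < j ∧ (j : ℕ) ≤ (l : ℕ) ∧ v = s • e i + t • e j} ∪
      {v | ∃ (s : ℝ) (i : Fin (m + 1)), (s = 1 ∨ s = -1) ∧ (l : ℕ) < (i : ℕ) ∧
        v = s • e i} ∪
      {v | ∃ (s t : ℝ) (i j : Fin (m + 1)), (s = 1 ∨ s = -1) ∧ (t = 1 ∨ t = -1) ∧
        (l : ℕ) < (i : ℕ) ∧ i < j ∧ v = s • e i + t • e j} :=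
  stmt_8_general m e he Δ hΔ α hα hαlast l d hd Y hY
end

section
/- In ℝ^r with the standard inner product, let Δ = C_r = {±2e_i : 1 ≤ i ≤ r} ∪ {±e_i ± e_j : 1 ≤ i < j ≤ r} (r ≥ 2), with fundamental system Π = {α_i = e_i − e_{i+1} : 1 ≤ i ≤ r−1} ∪ {α_r = 2e_r}, and let α^l ∈ ℝ^r be determined by ⟨α^l, α_j⟩ = δ_{lj}. Then, with Y = (π/2)α^l: for 1 ≤ l ≤ r−1, Σ_Y = {±2e_i : 1 ≤ i ≤ r} ∪ {±e_i ± e_j : 1 ≤ i < j ≤ l} ∪ {±e_i ± e_j : l < i < j ≤ r} (the root system C_l ∪ C_{r−l}); and for l = r, Σ_Y = {±(e_i − e_j) : 1 ≤ i < j ≤ r} (a root system of type A_{r−1} consisting of short roots). -/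
/-!
Write `Y = (π/2) d`, so that `⟪λ, Y⟫ ∈ πℤ` means `⟪λ, d⟫ ∈ 2ℤ`. Solving `⟪d, α_j⟫ = δ_{jl}` from
the last simple root upwards gives `2 d_r = [l = r]` and `d_i - d_{i+1} = δ_{il}`: for `l < r` the
vector `d` is the indicator of `{i ≤ l}`, for `l = r` it is constantly `1/2`. Membership in `Σ_Y`
is then a parity check on `±2 d_i` and `±d_i ± d_j`. For the indicator, `±2 d_i` is always even
and `±d_i ± d_j` is even exactly when `i` and `j` lie on the same side of `l`; for the constant,
`±2 d_i = ±1` is odd and `±d_i ± d_j` is even exactly when the signs differ.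
-/

open RealInnerProductSpace

theorem exists_int_inner_smul_pi_div_two_iff {E : Type*} [NormedAddCommGroup E]
    [InnerProductSpace ℝ E] (v d : E) :
    (∃ k : ℤ, ⟪v, (Real.pi / 2) • d⟫ = k * Real.pi) ↔ ∃ k : ℤ, ⟪v, d⟫ = 2 * k := by
  refine exists_congr fun k => ?_
  rw [real_inner_smul_right]
  constructor <;> intro h
  · nlinarith [Real.pi_pos]
  · rw [h]; ring

theorem inner_smul_single_one_left {ι : Type*} [Fintype ι] [DecidableEq ι] (s : ℝ) (i : ι)
    (d : EuclideanSpace ℝ ι) : ⟪s • EuclideanSpace.single i (1 : ℝ), d⟫ = s * d i := by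
  simp [real_inner_smul_left, EuclideanSpace.inner_single_left]

theorem Fin.eq_last_add_ite_of_castSucc_eq_succ_add {m : ℕ} (l : Fin (m + 1))
    (f : Fin (m + 1) → ℝ)
    (h : ∀ i : Fin m, f i.castSucc = f i.succ + if i.castSucc = l then 1 else 0)
    (i : Fin (m + 1)) : f i = f (Fin.last m) + if i ≤ l ∧ l ≠ Fin.last m then 1 else 0 := by
  induction i using Fin.reverseInduction with
  | last => simp [Fin.last_le_iff]
  | cast i ih =>
    rw [h, ih, add_assoc]
    congr 1
    have := i.isLt
    simp only [Fin.le_def, ne_eq, Fin.ext_iff, Fin.val_castSucc, Fin.val_succ, Fin.val_last]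
    split_ifs <;> norm_num <;> omega

open EuclideanSpace in
theorem dual_simpleRootsC_apply {m : ℕ} {α : Fin (m + 1) → EuclideanSpace ℝ (Fin (m + 1))}
    (hα : ∀ i : Fin m, α i.castSucc = single i.castSucc 1 - single i.succ 1)
    (hαlast : α (Fin.last m) = (2 : ℝ) • single (Fin.last m) 1) {l : Fin (m + 1)}
    {d : EuclideanSpace ℝ (Fin (m + 1))} (hd : ∀ j, ⟪d, α j⟫ = if j = l then 1 else 0)
    (i : Fin (m + 1)) :
    d i = (if l = Fin.last m then 1 / 2 else 0) + if i ≤ l ∧ l ≠ Fin.last m then 1 else 0 := by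
  have hcoord : ∀ j, ⟪d, single j 1⟫ = d j := fun j => by
    simp [EuclideanSpace.inner_single_right]
  refine (Fin.eq_last_add_ite_of_castSucc_eq_succ_add l d (fun j => ?_) i).trans
    (congrArg (· + _) ?_)
  · have h := hd j.castSucc
    rw [hα, inner_sub_right, hcoord, hcoord] at h
    linarith
  · have h := hd (Fin.last m)
    rw [hαlast, real_inner_smul_right, hcoord] at h
    rcases eq_or_ne l (Fin.last m) with rfl | hl
    · simp only [if_true] at h ⊢
      linarith
    · rw [if_neg hl.symm] at h
      rw [if_neg hl]
      linarith

section
variable {n : ℕ} {d : EuclideanSpace ℝ (Fin n)} {s t : ℝ} {i j : Fin n}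

open EuclideanSpace

theorem not_exists_int_eq_two_mul_of_abs_eq_one {x : ℝ} (hx : |x| = 1) :
    ¬ ∃ k : ℤ, x = 2 * k := by
  rintro ⟨k, rfl⟩
  have : |2 * k| = 1 := by exact_mod_cast hx
  rw [Int.abs_eq_natAbs] at this
  omega

theorem exists_int_add_eq_two_mul_of_sign (hs : s = 1 ∨ s = -1) (ht : t = 1 ∨ t = -1) :
    ∃ k : ℤ, s + t = 2 * k := by
  rcases hs with rfl | rfl <;> rcases ht with rfl | rfl
  exacts [⟨1, by norm_num⟩, ⟨0, by norm_num⟩, ⟨0, by norm_num⟩, ⟨-1, by norm_num⟩]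

theorem exists_int_inner_long_of_indicator {l : Fin n} (hd : ∀ i, d i = if i ≤ l then 1 else 0)
    (hs : s = 2 ∨ s = -2) : ∃ k : ℤ, ⟪s • single i 1, d⟫ = 2 * k := by
  rw [inner_smul_single_one_left, hd]
  rcases hs with rfl | rfl <;> split_ifs
  exacts [⟨1, by norm_num⟩, ⟨0, by norm_num⟩, ⟨-1, by norm_num⟩, ⟨0, by norm_num⟩]

theorem exists_int_inner_short_iff_of_indicator {l : Fin n}
    (hd : ∀ i, d i = if i ≤ l then 1 else 0) (hs : s = 1 ∨ s = -1) (ht : t = 1 ∨ t = -1)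
    (hij : i < j) :
    (∃ k : ℤ, ⟪s • single i 1 + t • single j 1, d⟫ = 2 * k) ↔ j ≤ l ∨ l < i := by
  rw [inner_add_left, inner_smul_single_one_left, inner_smul_single_one_left, hd, hd]
  rcases le_or_gt j l with hjl | hlj
  · rw [if_pos (hij.le.trans hjl), if_pos hjl, mul_one, mul_one]
    exact iff_of_true (exists_int_add_eq_two_mul_of_sign hs ht) (Or.inl hjl)
  rcases le_or_gt i l with hil | hli
  · rw [if_pos hil, if_neg hlj.not_ge, mul_one, mul_zero, add_zero]
    refine iff_of_false (not_exists_int_eq_two_mul_of_abs_eq_one ?_) ?_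
    · rcases hs with rfl | rfl <;> norm_num
    · rintro (hjl | hli) <;> order
  · rw [if_neg hli.not_ge, if_neg hlj.not_ge, mul_zero, mul_zero, add_zero]
    exact iff_of_true ⟨0, by norm_num⟩ (Or.inr hli)

theorem not_exists_int_inner_long_of_const (hd : ∀ i, d i = 1 / 2) (hs : s = 2 ∨ s = -2) :
    ¬ ∃ k : ℤ, ⟪s • single i 1, d⟫ = 2 * k := by
  rw [inner_smul_single_one_left, hd]
  apply not_exists_int_eq_two_mul_of_abs_eq_one
  rcases hs with rfl | rfl <;> norm_num

theorem exists_int_inner_short_iff_of_const (hd : ∀ i, d i = 1 / 2) (hs : s = 1 ∨ s = -1)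
    (ht : t = 1 ∨ t = -1) :
    (∃ k : ℤ, ⟪s • single i 1 + t • single j 1, d⟫ = 2 * k) ↔ t = -s := by
  rw [inner_add_left, inner_smul_single_one_left, inner_smul_single_one_left, hd, hd]
  have hodd {x : ℝ} (hx : |x| = 1) (hst : t ≠ -s) := iff_of_false
    (not_exists_int_eq_two_mul_of_abs_eq_one hx) hst
  rcases hs with rfl | rfl <;> rcases ht with rfl | rfl
  · exact hodd (by norm_num) (by norm_num)
  · exact iff_of_true ⟨0, by norm_num⟩ (by norm_num)
  · exact iff_of_true ⟨0, by norm_num⟩ (by norm_num)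
  · exact hodd (by norm_num) (by norm_num)

theorem setOf_mem_rootSystemC_and_even_inner_of_indicator {l : Fin n}
    (hd : ∀ i, d i = if i ≤ l then 1 else 0) :
    {lam | lam ∈ {v | ∃ (s : ℝ) (i : Fin n), (s = 2 ∨ s = -2) ∧ v = s • single i 1} ∪
        {v | ∃ (s t : ℝ) (i j : Fin n), (s = 1 ∨ s = -1) ∧ (t = 1 ∨ t = -1) ∧
          i < j ∧ v = s • single i 1 + t • single j 1} ∧ ∃ k : ℤ, ⟪lam, d⟫ = 2 * k} =
      {v | ∃ (s : ℝ) (i : Fin n), (s = 2 ∨ s = -2) ∧ v = s • single i 1} ∪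
      {v | ∃ (s t : ℝ) (i j : Fin n), (s = 1 ∨ s = -1) ∧ (t = 1 ∨ t = -1) ∧
        i < j ∧ (j : ℕ) ≤ (l : ℕ) ∧ v = s • single i 1 + t • single j 1} ∪
      {v | ∃ (s t : ℝ) (i j : Fin n), (s = 1 ∨ s = -1) ∧ (t = 1 ∨ t = -1) ∧
        (l : ℕ) < (i : ℕ) ∧ i < j ∧ v = s • single i 1 + t • single j 1} := by
  ext v
  constructor
  · rintro ⟨⟨s, i, hs, rfl⟩ | ⟨s, t, i, j, hs, ht, hij, rfl⟩, hk⟩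
    · exact Or.inl (Or.inl ⟨s, i, hs, rfl⟩)
    · rcases (exists_int_inner_short_iff_of_indicator hd hs ht hij).1 hk with hjl | hli
      · exact Or.inl (Or.inr ⟨s, t, i, j, hs, ht, hij, hjl, rfl⟩)
      · exact Or.inr ⟨s, t, i, j, hs, ht, hli, hij, rfl⟩
  · rintro ((⟨s, i, hs, rfl⟩ | ⟨s, t, i, j, hs, ht, hij, hjl, rfl⟩) |
      ⟨s, t, i, j, hs, ht, hli, hij, rfl⟩)
    · exact ⟨Or.inl ⟨s, i, hs, rfl⟩, exists_int_inner_long_of_indicator hd hs⟩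
    · exact ⟨Or.inr ⟨s, t, i, j, hs, ht, hij, rfl⟩,
        (exists_int_inner_short_iff_of_indicator hd hs ht hij).2 (Or.inl hjl)⟩
    · exact ⟨Or.inr ⟨s, t, i, j, hs, ht, hij, rfl⟩,
        (exists_int_inner_short_iff_of_indicator hd hs ht hij).2 (Or.inr hli)⟩

theorem setOf_mem_rootSystemC_and_even_inner_of_const (hd : ∀ i, d i = 1 / 2) :
    {lam | lam ∈ {v | ∃ (s : ℝ) (i : Fin n), (s = 2 ∨ s = -2) ∧ v = s • single i 1} ∪
        {v | ∃ (s t : ℝ) (i j : Fin n), (s = 1 ∨ s = -1) ∧ (t = 1 ∨ t = -1) ∧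
          i < j ∧ v = s • single i 1 + t • single j 1} ∧ ∃ k : ℤ, ⟪lam, d⟫ = 2 * k} =
      {v | ∃ i j : Fin n, i < j ∧
        (v = single i 1 - single j 1 ∨ v = single j 1 - single i 1)} := by
  ext v
  constructor
  · rintro ⟨⟨s, i, hs, rfl⟩ | ⟨s, t, i, j, hs, ht, hij, rfl⟩, hk⟩
    · exact absurd hk (not_exists_int_inner_long_of_const hd hs)
    · obtain rfl := (exists_int_inner_short_iff_of_const hd hs ht).1 hk
      rcases hs with rfl | rfl
      exacts [⟨i, j, hij, Or.inl (by module)⟩, ⟨i, j, hij, Or.inr (by module)⟩]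
  · rintro ⟨i, j, hij, rfl | rfl⟩
    · have hv : (single i 1 - single j 1 : EuclideanSpace ℝ (Fin n)) =
          (1 : ℝ) • single i 1 + (-1 : ℝ) • single j 1 := by module
      refine ⟨Or.inr ⟨1, -1, i, j, .inl rfl, .inr rfl, hij, hv⟩, ?_⟩
      rw [hv]
      exact (exists_int_inner_short_iff_of_const hd (.inl rfl) (.inr rfl)).2 rfl
    · have hv : (single j 1 - single i 1 : EuclideanSpace ℝ (Fin n)) =
          (-1 : ℝ) • single i 1 + (1 : ℝ) • single j 1 := by module
      refine ⟨Or.inr ⟨-1, 1, i, j, .inr rfl, .inl rfl, hij, hv⟩, ?_⟩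
      rw [hv]
      exact (exists_int_inner_short_iff_of_const hd (.inr rfl) (.inl rfl)).2 (neg_neg 1).symm

end

theorem stmt_9_general (m : ℕ)
    (e : Fin (m + 1) → EuclideanSpace ℝ (Fin (m + 1)))
    (he : ∀ i, e i = EuclideanSpace.single i (1 : ℝ))
    (Δ : Set (EuclideanSpace ℝ (Fin (m + 1))))
    (hΔ : Δ = {v | ∃ (s : ℝ) (i : Fin (m + 1)), (s = 2 ∨ s = -2) ∧ v = s • e i} ∪
      {v | ∃ (s t : ℝ) (i j : Fin (m + 1)), (s = 1 ∨ s = -1) ∧ (t = 1 ∨ t = -1) ∧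
        i < j ∧ v = s • e i + t • e j})
    (α : Fin (m + 1) → EuclideanSpace ℝ (Fin (m + 1)))
    (hα : ∀ i : Fin m, α i.castSucc = e i.castSucc - e i.succ)
    (hαlast : α (Fin.last m) = (2 : ℝ) • e (Fin.last m))
    (l : Fin (m + 1))
    (d : EuclideanSpace ℝ (Fin (m + 1)))
    (hd : ∀ j, ⟪d, α j⟫ = if j = l then 1 else 0)
    (Y : EuclideanSpace ℝ (Fin (m + 1))) (hY : Y = (Real.pi / 2) • d) :
    ((l : ℕ) < m →
      {lam | lam ∈ Δ ∧ ∃ k : ℤ, ⟪lam, Y⟫ = (k : ℝ) * Real.pi} =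
        {v | ∃ (s : ℝ) (i : Fin (m + 1)), (s = 2 ∨ s = -2) ∧ v = s • e i} ∪
        {v | ∃ (s t : ℝ) (i j : Fin (m + 1)), (s = 1 ∨ s = -1) ∧ (t = 1 ∨ t = -1) ∧
          i < j ∧ (j : ℕ) ≤ (l : ℕ) ∧ v = s • e i + t • e j} ∪
        {v | ∃ (s t : ℝ) (i j : Fin (m + 1)), (s = 1 ∨ s = -1) ∧ (t = 1 ∨ t = -1) ∧
          (l : ℕ) < (i : ℕ) ∧ i < j ∧ v = s • e i + t • e j}) ∧
    ((l : ℕ) = m →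
      {lam | lam ∈ Δ ∧ ∃ k : ℤ, ⟪lam, Y⟫ = (k : ℝ) * Real.pi} =
        {v | ∃ i j : Fin (m + 1), i < j ∧ (v = e i - e j ∨ v = e j - e i)}) := by
  obtain rfl : e = fun i => EuclideanSpace.single i 1 := funext he
  subst hΔ hY
  have hdual := dual_simpleRootsC_apply hα hαlast hd
  simp only [exists_int_inner_smul_pi_div_two_iff]
  refine ⟨fun hl => ?_, fun hl => ?_⟩
  · have hl' : l ≠ Fin.last m := Fin.ne_of_lt hl
    exact setOf_mem_rootSystemC_and_even_inner_of_indicator fun i => by simpa [hl'] using hdual i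
  · have hl' : l = Fin.last m := Fin.ext hl
    exact setOf_mem_rootSystemC_and_even_inner_of_const fun i => by simpa [hl'] using hdual i

/-- **Computation of `Σ_Y` for `Δ = C_r` (`r = m + 1 ≥ 2`) and `Y = (π/2) αˡ`.**
With the standard basis `e` of `ℝ^r`, `Δ = {±2e_i} ∪ {±e_i ± e_j : i < j}`, simple roots
`α_i = e_i − e_{i+1}` (for `i < r − 1`) and `α_{r−1} = 2e_{r−1}` (0-based), and `d = αˡ`
the dual vector of the simple root with 0-based index `l`:
if `l < m` (1-based `1 ≤ l ≤ r − 1`), then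
`Σ_Y = {±2e_i : all i} ∪ {±e_i ± e_j : i < j ≤ l} ∪ {±e_i ± e_j : l < i < j}`
(the root system `C_{l+1} ∪ C_{r−l−1}`); if `l = m` (1-based `l = r`), then
`Σ_Y = {±(e_i − e_j) : i < j}` (a root system of type `A_{r−1}` of short roots). -/
theorem stmt_9 (m : ℕ) (hm : 1 ≤ m)
    (e : Fin (m + 1) → EuclideanSpace ℝ (Fin (m + 1)))
    (he : ∀ i, e i = EuclideanSpace.single i (1 : ℝ))
    (Δ : Set (EuclideanSpace ℝ (Fin (m + 1))))
    (hΔ : Δ = {v | ∃ (s : ℝ) (i : Fin (m + 1)), (s = 2 ∨ s = -2) ∧ v = s • e i} ∪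
      {v | ∃ (s t : ℝ) (i j : Fin (m + 1)), (s = 1 ∨ s = -1) ∧ (t = 1 ∨ t = -1) ∧
        i < j ∧ v = s • e i + t • e j})
    (α : Fin (m + 1) → EuclideanSpace ℝ (Fin (m + 1)))
    (hα : ∀ i : Fin m, α i.castSucc = e i.castSucc - e i.succ)
    (hαlast : α (Fin.last m) = (2 : ℝ) • e (Fin.last m))
    (l : Fin (m + 1))
    (d : EuclideanSpace ℝ (Fin (m + 1)))
    (hd : ∀ j, ⟪d, α j⟫ = if j = l then 1 else 0)
    (Y : EuclideanSpace ℝ (Fin (m + 1))) (hY : Y = (Real.pi / 2) • d) :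
    ((l : ℕ) < m →
      {lam | lam ∈ Δ ∧ ∃ k : ℤ, ⟪lam, Y⟫ = (k : ℝ) * Real.pi} =
        {v | ∃ (s : ℝ) (i : Fin (m + 1)), (s = 2 ∨ s = -2) ∧ v = s • e i} ∪
        {v | ∃ (s t : ℝ) (i j : Fin (m + 1)), (s = 1 ∨ s = -1) ∧ (t = 1 ∨ t = -1) ∧
          i < j ∧ (j : ℕ) ≤ (l : ℕ) ∧ v = s • e i + t • e j} ∪
        {v | ∃ (s t : ℝ) (i j : Fin (m + 1)), (s = 1 ∨ s = -1) ∧ (t = 1 ∨ t = -1) ∧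
          (l : ℕ) < (i : ℕ) ∧ i < j ∧ v = s • e i + t • e j}) ∧
    ((l : ℕ) = m →
      {lam | lam ∈ Δ ∧ ∃ k : ℤ, ⟪lam, Y⟫ = (k : ℝ) * Real.pi} =
        {v | ∃ i j : Fin (m + 1), i < j ∧ (v = e i - e j ∨ v = e j - e i)}) :=
  stmt_9_general m e he Δ hΔ α hα hαlast l d hd Y hY
end

section
/- In ℝ^r with the standard inner product, let Δ = BC_r = {±e_i, ±2e_i : 1 ≤ i ≤ r} ∪ {±e_i ± e_j : 1 ≤ i < j ≤ r}, with fundamental system Π = {α_i = e_i − e_{i+1} : 1 ≤ i ≤ r−1} ∪ {α_r = e_r}, and let α^l ∈ ℝ^r be determined by ⟨α^l, α_j⟩ = δ_{lj}. Then for every 1 ≤ l ≤ r, with Y = (π/2)α^l, Σ_Y = {±2e_i : 1 ≤ i ≤ r} ∪ {±e_i ± e_j : 1 ≤ i < j ≤ l} ∪ {±e_i : l < i ≤ r} ∪ {±e_i ± e_j : l < i < j ≤ r}; that is, Σ_Y is C_l (formed by the middle and long roots on the first l coordinates) joined with BC_{r−l} (on the last r−l coordinates). -/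
/-!
Telescoping `e_i = α_i + α_{i+1} + ⋯ + α_{r-1}` shows `⟪αˡ, e_i⟫ = 1` for `i ≤ l` and `0` for
`i > l`. Hence `⟪λ, Y⟫ = (π/2) c`, where `c` is the sum of the coefficients of the root `λ` on
the coordinates `i ≤ l`, and `λ ∈ Σ_Y` exactly when `c` is even: this discards `±e_i` for
`i ≤ l` and the roots `±e_i ± e_j` with `i ≤ l < j`, and keeps everything else.
-/

open RealInnerProductSpace

section DualVector

variable {E : Type*} [NormedAddCommGroup E] [InnerProductSpace ℝ E] {m : ℕ}
  {e α : Fin (m + 1) → E} {l : Fin (m + 1)} {d : E}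

theorem inner_dual_basisVector_eq_ite
    (hα : ∀ i : Fin m, α i.castSucc = e i.castSucc - e i.succ)
    (hαlast : α (Fin.last m) = e (Fin.last m))
    (hd : ∀ j, ⟪d, α j⟫ = if j = l then 1 else 0) (i : Fin (m + 1)) :
    ⟪d, e i⟫ = if i ≤ l then 1 else 0 := by
  induction i using Fin.reverseInduction with
  | last => simp only [← hαlast, hd, Fin.last_le_iff, eq_comm]
  | cast i ih =>
    have hstep : ⟪d, e i.castSucc⟫ = ⟪d, α i.castSucc⟫ + ⟪d, e i.succ⟫ := by
      rw [hα, inner_sub_right]; ring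
    rw [hstep, hd, ih]
    simp only [Fin.le_def, Fin.ext_iff, Fin.val_castSucc, Fin.val_succ]
    split_ifs <;> first | omega | norm_num

theorem inner_smul_basisVector_halfPi_smul_dual
    (hα : ∀ i : Fin m, α i.castSucc = e i.castSucc - e i.succ)
    (hαlast : α (Fin.last m) = e (Fin.last m))
    (hd : ∀ j, ⟪d, α j⟫ = if j = l then 1 else 0) (s : ℝ) (i : Fin (m + 1)) :
    ⟪s • e i, (Real.pi / 2) • d⟫ = s * (if i ≤ l then 1 else 0) * (Real.pi / 2) := by
  rw [real_inner_smul_left, real_inner_smul_right, real_inner_comm,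
    inner_dual_basisVector_eq_ite hα hαlast hd]
  ring

end DualVector

theorem exists_int_mul_halfPi_eq_iff (a : ℝ) :
    (∃ k : ℤ, a * (Real.pi / 2) = k * Real.pi) ↔ ∃ k : ℤ, a = 2 * k := by
  refine exists_congr fun k => ⟨fun h => ?_, fun h => by rw [h]; ring⟩
  refine mul_right_cancel₀ Real.pi_ne_zero ?_
  linear_combination 2 * h

theorem ne_two_mul_int_of_eq_one_or_neg_one {s : ℝ} (hs : s = 1 ∨ s = -1) (k : ℤ) :
    s ≠ 2 * k := by
  rcases hs with rfl | rfl <;> intro h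
  · have : (1 : ℤ) = 2 * k := by exact_mod_cast h
    omega
  · have : (-1 : ℤ) = 2 * k := by exact_mod_cast h
    omega

theorem exists_int_smul_ite_mul_halfPi_iff {s : ℝ} (hs : s = 1 ∨ s = -1 ∨ s = 2 ∨ s = -2)
    (p : Prop) [Decidable p] :
    (∃ k : ℤ, s * (if p then 1 else 0) * (Real.pi / 2) = k * Real.pi) ↔
      (s = 2 ∨ s = -2) ∨ ¬p := by
  rw [exists_int_mul_halfPi_eq_iff]
  by_cases hp : p
  · simp only [hp, if_true, mul_one, not_true, or_false]
    constructor
    · rintro ⟨k, hk⟩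
      rcases hs with hs | hs | hs
      · exact absurd hk (ne_two_mul_int_of_eq_one_or_neg_one (.inl hs) k)
      · exact absurd hk (ne_two_mul_int_of_eq_one_or_neg_one (.inr hs) k)
      · exact hs
    · rintro (rfl | rfl)
      exacts [⟨1, by norm_num⟩, ⟨-1, by norm_num⟩]
  · simp only [hp, if_false, mul_zero, not_false_eq_true, or_true, iff_true]
    exact ⟨0, by norm_num⟩

theorem exists_int_add_ite_mul_halfPi_iff {s t : ℝ} (hs : s = 1 ∨ s = -1) (ht : t = 1 ∨ t = -1)
    {p q : Prop} [Decidable p] [Decidable q] (hqp : q → p) :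
    (∃ k : ℤ, (s * (if p then 1 else 0) + t * (if q then 1 else 0)) * (Real.pi / 2) =
        k * Real.pi) ↔ q ∨ ¬p := by
  rw [exists_int_mul_halfPi_eq_iff]
  by_cases hq : q
  · simp only [hqp hq, hq, if_true, mul_one, true_or, iff_true]
    rcases hs with rfl | rfl <;> rcases ht with rfl | rfl
    exacts [⟨1, by norm_num⟩, ⟨0, by norm_num⟩, ⟨0, by norm_num⟩, ⟨-1, by norm_num⟩]
  by_cases hp : p
  · simp only [hp, hq, if_true, if_false, mul_one, mul_zero, add_zero, not_true, or_self,
      iff_false, not_exists]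
    exact ne_two_mul_int_of_eq_one_or_neg_one hs
  · simp only [hp, hq, if_false, mul_zero, add_zero, not_false_eq_true, or_true, iff_true]
    exact ⟨0, by norm_num⟩

-- Indices are 0-based: `l` is the paper's `l - 1`.
theorem stmt_11_general (m : ℕ)
    (e : Fin (m + 1) → EuclideanSpace ℝ (Fin (m + 1)))
    (Δ : Set (EuclideanSpace ℝ (Fin (m + 1))))
    (hΔ : Δ = {v | ∃ (s : ℝ) (i : Fin (m + 1)),
        (s = 1 ∨ s = -1 ∨ s = 2 ∨ s = -2) ∧ v = s • e i} ∪
      {v | ∃ (s t : ℝ) (i j : Fin (m + 1)), (s = 1 ∨ s = -1) ∧ (t = 1 ∨ t = -1) ∧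
        i < j ∧ v = s • e i + t • e j})
    (α : Fin (m + 1) → EuclideanSpace ℝ (Fin (m + 1)))
    (hα : ∀ i : Fin m, α i.castSucc = e i.castSucc - e i.succ)
    (hαlast : α (Fin.last m) = e (Fin.last m))
    (l : Fin (m + 1))
    (d : EuclideanSpace ℝ (Fin (m + 1)))
    (hd : ∀ j, ⟪d, α j⟫ = if j = l then 1 else 0)
    (Y : EuclideanSpace ℝ (Fin (m + 1))) (hY : Y = (Real.pi / 2) • d) :
    {lam | lam ∈ Δ ∧ ∃ k : ℤ, ⟪lam, Y⟫ = (k : ℝ) * Real.pi} =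
      {v | ∃ (s : ℝ) (i : Fin (m + 1)), (s = 2 ∨ s = -2) ∧ v = s • e i} ∪
      {v | ∃ (s t : ℝ) (i j : Fin (m + 1)), (s = 1 ∨ s = -1) ∧ (t = 1 ∨ t = -1) ∧
        i < j ∧ (j : ℕ) ≤ (l : ℕ) ∧ v = s • e i + t • e j} ∪
      {v | ∃ (s : ℝ) (i : Fin (m + 1)), (s = 1 ∨ s = -1) ∧ (l : ℕ) < (i : ℕ) ∧
        v = s • e i} ∪
      {v | ∃ (s t : ℝ) (i j : Fin (m + 1)), (s = 1 ∨ s = -1) ∧ (t = 1 ∨ t = -1) ∧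
        (l : ℕ) < (i : ℕ) ∧ i < j ∧ v = s • e i + t • e j} := by
  subst hY
  have hinner := inner_smul_basisVector_halfPi_smul_dual hα hαlast hd
  have hinner₂ (s t : ℝ) (i j : Fin (m + 1)) : ⟪s • e i + t • e j, (Real.pi / 2) • d⟫ =
      (s * (if i ≤ l then 1 else 0) + t * (if j ≤ l then 1 else 0)) * (Real.pi / 2) := by
    rw [inner_add_left, hinner, hinner, add_mul]
  ext v
  simp only [hΔ, Set.mem_ofPred_eq, Set.mem_union, Fin.val_fin_le, Fin.val_fin_lt]
  constructor
  · rintro ⟨⟨s, i, hs, rfl⟩ | ⟨s, t, i, j, hs, ht, hij, rfl⟩, hk⟩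
    · rw [hinner, exists_int_smul_ite_mul_halfPi_iff hs, not_le] at hk
      rcases hk with h2 | hli
      · exact .inl (.inl (.inl ⟨s, i, h2, rfl⟩))
      · rcases hs with hs | hs | hs
        · exact .inl (.inr ⟨s, i, .inl hs, hli, rfl⟩)
        · exact .inl (.inr ⟨s, i, .inr hs, hli, rfl⟩)
        · exact .inl (.inl (.inl ⟨s, i, hs, rfl⟩))
    · rw [hinner₂, exists_int_add_ite_mul_halfPi_iff hs ht hij.le.trans, not_le] at hk
      exact hk.imp (fun hjl => .inl (.inr ⟨s, t, i, j, hs, ht, hij, hjl, rfl⟩))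
        fun hli => ⟨s, t, i, j, hs, ht, hli, hij, rfl⟩
  · rintro (((⟨s, i, hs, rfl⟩ | ⟨s, t, i, j, hs, ht, hij, hjl, rfl⟩) |
      ⟨s, i, hs, hli, rfl⟩) | ⟨s, t, i, j, hs, ht, hli, hij, rfl⟩)
    · exact ⟨.inl ⟨s, i, by tauto, rfl⟩, by
        rw [hinner, exists_int_smul_ite_mul_halfPi_iff (by tauto)]; exact .inl hs⟩
    · exact ⟨.inr ⟨s, t, i, j, hs, ht, hij, rfl⟩, by
        rw [hinner₂, exists_int_add_ite_mul_halfPi_iff hs ht hij.le.trans]; exact .inl hjl⟩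
    · exact ⟨.inl ⟨s, i, by tauto, rfl⟩, by
        rw [hinner, exists_int_smul_ite_mul_halfPi_iff (by tauto), not_le]; exact .inr hli⟩
    · exact ⟨.inr ⟨s, t, i, j, hs, ht, hij, rfl⟩, by
        rw [hinner₂, exists_int_add_ite_mul_halfPi_iff hs ht hij.le.trans, not_le]
        exact .inr hli⟩

/-- **Computation of `Σ_Y` for `Δ = BC_r` (`r = m + 1`) and `Y = (π/2) αˡ`.**
With the standard basis `e` of `ℝ^r`, `Δ = {±e_i, ±2e_i} ∪ {±e_i ± e_j : i < j}`, simple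
roots `α_i = e_i − e_{i+1}` (for `i < r − 1`) and `α_{r−1} = e_{r−1}` (0-based), and
`d = αˡ` the dual vector of the simple root with 0-based index `l`, we have
`Σ_Y = {±2e_i : all i} ∪ {±e_i ± e_j : i < j ≤ l} ∪ {±e_i : l < i} ∪
{±e_i ± e_j : l < i < j}`, i.e. `C_{l+1}` (middle and long roots on the first `l+1`
coordinates) joined with `BC_{r−l−1}` on the remaining coordinates. -/
theorem stmt_11 (m : ℕ)
    (e : Fin (m + 1) → EuclideanSpace ℝ (Fin (m + 1)))
    (he : ∀ i, e i = EuclideanSpace.single i (1 : ℝ))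
    (Δ : Set (EuclideanSpace ℝ (Fin (m + 1))))
    (hΔ : Δ = {v | ∃ (s : ℝ) (i : Fin (m + 1)),
        (s = 1 ∨ s = -1 ∨ s = 2 ∨ s = -2) ∧ v = s • e i} ∪
      {v | ∃ (s t : ℝ) (i j : Fin (m + 1)), (s = 1 ∨ s = -1) ∧ (t = 1 ∨ t = -1) ∧
        i < j ∧ v = s • e i + t • e j})
    (α : Fin (m + 1) → EuclideanSpace ℝ (Fin (m + 1)))
    (hα : ∀ i : Fin m, α i.castSucc = e i.castSucc - e i.succ)
    (hαlast : α (Fin.last m) = e (Fin.last m))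
    (l : Fin (m + 1))
    (d : EuclideanSpace ℝ (Fin (m + 1)))
    (hd : ∀ j, ⟪d, α j⟫ = if j = l then 1 else 0)
    (Y : EuclideanSpace ℝ (Fin (m + 1))) (hY : Y = (Real.pi / 2) • d) :
    {lam | lam ∈ Δ ∧ ∃ k : ℤ, ⟪lam, Y⟫ = (k : ℝ) * Real.pi} =
      {v | ∃ (s : ℝ) (i : Fin (m + 1)), (s = 2 ∨ s = -2) ∧ v = s • e i} ∪
      {v | ∃ (s t : ℝ) (i j : Fin (m + 1)), (s = 1 ∨ s = -1) ∧ (t = 1 ∨ t = -1) ∧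
        i < j ∧ (j : ℕ) ≤ (l : ℕ) ∧ v = s • e i + t • e j} ∪
      {v | ∃ (s : ℝ) (i : Fin (m + 1)), (s = 1 ∨ s = -1) ∧ (l : ℕ) < (i : ℕ) ∧
        v = s • e i} ∪
      {v | ∃ (s t : ℝ) (i j : Fin (m + 1)), (s = 1 ∨ s = -1) ∧ (t = 1 ∨ t = -1) ∧
        (l : ℕ) < (i : ℕ) ∧ i < j ∧ v = s • e i + t • e j} :=
  stmt_11_general m e Δ hΔ α hα hαlast l d hd Y hY
end
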